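/- arXiv:1410.4361 — 9 statements merged into one kernel-verified Lean document; each statement's English description precedes it below -/
import Mathlib

section
/- For all integers k and t with 2 ≤ k ≤ t, the maximum number of edges among the bicliques (complete bipartite subgraphs) of the bi-intersection graph I_{2t}(k,k) equals C(t,k)², i.e., B(I_{2t}(k,k)) = C(t,k)². -/
/-!
If `(X, Y)` is a biclique, every member of `Y` lies in the complement of the union `U` of the
members of `X`, so `|X| |Y| ≤ C(|U|, k) C(2t - |U|, k)`. By log-concavity of `s ↦ C(s, k)` the
product `C(s, k) C(2t - s, k)` increases as `s` moves towards `t`, so it is at most `C(t, k)²`;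
this value is attained by splitting the ground set into two halves.
-/

open Finset

namespace Nat

theorem choose_mul_choose_succ_le {s u : ℕ} (k : ℕ) (h : s ≤ u) :
    s.choose k * (u + 1).choose k ≤ (s + 1).choose k * u.choose k := by
  rcases lt_or_ge s k with hsk | hks
  · simp [choose_eq_zero_of_lt hsk]
  obtain ⟨i, rfl⟩ := Nat.exists_eq_add_of_le hks
  obtain ⟨j, rfl⟩ := Nat.exists_eq_add_of_le h
  have hs := choose_mul_succ_eq (k + i) k
  have hu := choose_mul_succ_eq (k + i + j) k
  rw [show k + i + 1 - k = i + 1 by omega] at hs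
  rw [show k + i + j + 1 - k = i + j + 1 by omega] at hu
  set a := (k + i).choose k
  set a' := (k + i + 1).choose k
  set b := (k + i + j).choose k
  set b' := (k + i + j + 1).choose k
  -- after clearing denominators with `hs` and `hu` this is `(i+1)(k+i+j+1) ≤ (k+i+1)(i+j+1)`
  refine le_of_mul_le_mul_right ?_ (mul_pos (succ_pos i) (succ_pos (i + j)))
  calc a * b' * ((i + 1) * (i + j + 1))
      = a * b * ((i + 1) * (k + i + j + 1)) := by
        rw [show a * b' * ((i + 1) * (i + j + 1)) = a * (i + 1) * (b' * (i + j + 1)) by ring,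
          ← hu]; ring
    _ ≤ a * b * ((k + i + 1) * (i + j + 1)) := Nat.mul_le_mul_left _ (by nlinarith)
    _ = a' * b * ((i + 1) * (i + j + 1)) := by
        rw [show a * b * ((k + i + 1) * (i + j + 1)) = a * (k + i + 1) * b * (i + j + 1) by ring,
          hs]; ring

theorem choose_sub_mul_choose_add_le_sq {d t : ℕ} (k : ℕ) (hd : d ≤ t) :
    (t - d).choose k * (t + d).choose k ≤ t.choose k ^ 2 := by
  induction d with
  | zero => simp [sq]
  | succ d ih =>
    calc (t - (d + 1)).choose k * (t + d + 1).choose k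
        ≤ (t - (d + 1) + 1).choose k * (t + d).choose k := choose_mul_choose_succ_le k (by omega)
      _ = (t - d).choose k * (t + d).choose k := by rw [show t - (d + 1) + 1 = t - d by omega]
      _ ≤ t.choose k ^ 2 := ih (by omega)

theorem choose_mul_choose_le_sq_of_add_eq {s u t : ℕ} (k : ℕ) (h : s + u = 2 * t) :
    s.choose k * u.choose k ≤ t.choose k ^ 2 := by
  wlog hsu : s ≤ u generalizing s u
  · rw [mul_comm]; exact this (by omega) (by omega)
  have := choose_sub_mul_choose_add_le_sq k (d := t - s) (t := t) (by omega)
  rwa [show t - (t - s) = s by omega, show t + (t - s) = u by omega] at this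

end Nat

section Biclique

variable {α : Type*} [Fintype α] [DecidableEq α] {k : ℕ}

theorem card_filter_subset_eq_choose (T : Finset α) :
    #{a : {A : Finset α // #A = k} | a.1 ⊆ T} = (#T).choose k := by
  rw [← card_powersetCard, ← card_map (Function.Embedding.subtype _)]
  congr 1
  ext A
  simp [and_comm]

theorem card_le_choose_of_forall_subset {X : Finset {A : Finset α // #A = k}} {T : Finset α}
    (hX : ∀ a ∈ X, a.1 ⊆ T) : #X ≤ (#T).choose k :=
  (card_le_card fun a ha ↦ by simpa using hX a ha).trans_eq (card_filter_subset_eq_choose T)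

theorem exists_card_mul_card_le_choose_mul_choose {X Y : Finset {A : Finset α // #A = k}}
    (hXY : ∀ a ∈ X, ∀ b ∈ Y, Disjoint a.1 b.1) :
    ∃ U : Finset α, #X * #Y ≤ (#U).choose k * (#Uᶜ).choose k := by
  refine ⟨X.biUnion (·.1), Nat.mul_le_mul ?_ ?_⟩
  · exact card_le_choose_of_forall_subset fun a ha ↦ subset_biUnion_of_mem (·.1) ha
  · refine card_le_choose_of_forall_subset fun b hb ↦ ?_
    rw [subset_compl_iff_disjoint_right, disjoint_biUnion_right]
    exact fun a ha ↦ (hXY a ha b hb).symm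

end Biclique

theorem stmt_0_general (k t : ℕ) :
    IsGreatest
      {m : ℕ | ∃ X Y : Finset {A : Finset (Fin (2 * t)) // A.card = k},
        (∀ a ∈ X, ∀ b ∈ Y, Disjoint a.1 b.1) ∧ m = X.card * Y.card}
      (Nat.choose t k ^ 2) := by
  constructor
  · obtain ⟨T, -, hT⟩ := exists_subset_card_eq (s := (univ : Finset (Fin (2 * t)))) (n := t)
      (by rw [card_univ, Fintype.card_fin]; omega)
    have hTc : #Tᶜ = t := by rw [card_compl, Fintype.card_fin, hT]; omega
    refine ⟨univ.filter (·.1 ⊆ T), univ.filter (·.1 ⊆ Tᶜ), fun a ha b hb ↦ ?_, ?_⟩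
    · simp only [mem_filter, mem_univ, true_and] at ha hb
      exact disjoint_of_subset_left ha (subset_compl_iff_disjoint_right.mp hb).symm
    · rw [card_filter_subset_eq_choose, card_filter_subset_eq_choose, hT, hTc, sq]
  · rintro m ⟨X, Y, hXY, rfl⟩
    obtain ⟨U, hU⟩ := exists_card_mul_card_le_choose_mul_choose hXY
    refine hU.trans (Nat.choose_mul_choose_le_sq_of_add_eq k ?_)
    rw [card_add_card_compl, Fintype.card_fin]

theorem stmt_0 (k t : ℕ) (hk : 2 ≤ k) (hkt : k ≤ t) :
    IsGreatest
      {m : ℕ | ∃ X Y : Finset {A : Finset (Fin (2 * t)) // A.card = k},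
        (∀ a ∈ X, ∀ b ∈ Y, Disjoint a.1 b.1) ∧ m = X.card * Y.card}
      (Nat.choose t k ^ 2) :=
  stmt_0_general k t
end

section
/- Let 1 ≤ k ≤ t be integers and d = C(2t−2k, t−k). Then the minimum number of points of a (k,k;d)-cover-free family having 2t blocks equals C(2t,t), i.e., N((k,k;d), 2t) = C(2t,t). -/
/-!
Describe a family by the rows of its incidence matrix: a point `x` is recorded by the set
`f x` of blocks containing it, and `x ∈ (⋂_{l∈L} B_l) \ (⋃_{m∈M} B_m)` iff `L ⊆ f x` and
`M ∩ f x = ∅`. Double count the triples `(L, M, x)` with `|L| = |M| = k`: each of the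
`C(2t,k) C(2t-k,k)` pairs `(L, M)` contributes at least `d`, while a point with `|f x| = s`
contributes `C(s,k) C(2t-s,k) ≤ C(t,k)²`, because `s ↦ C(s,k) C(2t-s,k)` peaks at `s = t`.
Since `C(2t,t) C(t,k)² = d C(2t,k) C(2t-k,k)`, this forces `n ≥ C(2t,t)`. Conversely, with
the `t`-subsets of `[2t]` as points, a pair `(L, M)` is separated by the `d` sets `L ∪ T`,
`T` a `(t-k)`-subset of the complement of `L ∪ M`.
-/

/-- There exists an `(r,w;d)`-cover-free family with `n` points and `t` blocks:
a family `B` of `t` subsets of an `n`-point set such that for any disjoint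
index sets `L`, `M` with `|L| = r` and `|M| = w`,
`|(⋂_{l∈L} B_l) \ (⋃_{m∈M} B_m)| ≥ d`. -/
def ExistsCFF (r w d n t : ℕ) : Prop :=
  ∃ B : Fin t → Finset (Fin n),
    ∀ L M : Finset (Fin t), Disjoint L M → L.card = r → M.card = w →
      d ≤ ((L.inf B) \ (M.sup B)).card

/-- `N((r,w;d),t)`: the minimum number of points of an `(r,w;d)`-CFF with `t`
blocks. -/
noncomputable def NCFF (r w d t : ℕ) : ℕ :=
  sInf {n : ℕ | ExistsCFF r w d n t}

open Finset

lemma mem_inf_sdiff_sup_iff {ι α : Type*} [Fintype ι] [Fintype α] [DecidableEq α]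
    (B : ι → Finset α) (L M : Finset ι) (x : α) :
    x ∈ L.inf B \ M.sup B ↔
      L ⊆ ({i | x ∈ B i} : Finset ι) ∧ Disjoint M ({i | x ∈ B i} : Finset ι) := by
  simp [Finset.mem_inf, subset_iff, disjoint_left]

lemma ExistsCFF.exists_rows {r w d n t : ℕ} (h : ExistsCFF r w d n t) :
    ∃ f : Fin n → Finset (Fin t), ∀ L M : Finset (Fin t), Disjoint L M → #L = r → #M = w →
      d ≤ #{x | L ⊆ f x ∧ Disjoint M (f x)} := by
  obtain ⟨B, hB⟩ := h
  refine ⟨fun x => {i | x ∈ B i}, fun L M hLM hL hM => (hB L M hLM hL hM).trans_eq ?_⟩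
  congr 1
  ext x
  simp only [mem_inf_sdiff_sup_iff, mem_filter, mem_univ, true_and]

lemma existsCFF_of_rows {r w d t : ℕ} {α : Type*} [Fintype α] (f : α → Finset (Fin t))
    (hf : ∀ L M : Finset (Fin t), Disjoint L M → #L = r → #M = w →
      d ≤ #{x | L ⊆ f x ∧ Disjoint M (f x)}) :
    ExistsCFF r w d (Fintype.card α) t := by
  let e := Fintype.equivFin α
  let B : Fin t → Finset (Fin (Fintype.card α)) := fun i => {y | i ∈ f (e.symm y)}
  have hrow : ∀ x, ({i | e x ∈ B i} : Finset (Fin t)) = f x := fun x => by ext; simp [B]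
  refine ⟨B, fun L M hLM hL hM => (hf L M hLM hL hM).trans_eq (card_equiv e fun x => ?_)⟩
  rw [mem_inf_sdiff_sup_iff, hrow, mem_filter, and_iff_right (mem_univ x)]

section DisjointPairs

variable {ι : Type*} [Fintype ι] [DecidableEq ι]

variable (ι) in
def disjointPairs (k : ℕ) : Finset (Finset ι × Finset ι) :=
  {p ∈ powersetCard k univ ×ˢ powersetCard k univ | Disjoint p.1 p.2}

lemma card_disjointPairs (k : ℕ) :
    #(disjointPairs ι k) = (Fintype.card ι).choose k * (Fintype.card ι - k).choose k :=
  calc #(disjointPairs ι k) = ∑ L ∈ powersetCard k univ, #(powersetCard k Lᶜ) := by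
        rw [disjointPairs, card_filter, sum_product]
        refine sum_congr rfl fun L _ => (card_filter _ _).symm.trans (congrArg card ?_)
        ext M
        simp [subset_compl_iff_disjoint_left, and_comm]
    _ = _ := by
        rw [sum_congr rfl fun L hL => by
            rw [card_powersetCard, card_compl, (mem_powersetCard.1 hL).2],
          sum_const, card_powersetCard, card_univ, smul_eq_mul]

lemma filter_disjointPairs_eq_product (k : ℕ) (R : Finset ι) :
    {p ∈ disjointPairs ι k | p.1 ⊆ R ∧ Disjoint p.2 R} =
      powersetCard k R ×ˢ powersetCard k Rᶜ := by
  ext ⟨L, M⟩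
  simp only [disjointPairs, mem_filter, mem_product, mem_powersetCard, subset_univ, true_and,
    subset_compl_iff_disjoint_right]
  constructor
  · rintro ⟨⟨⟨hL, hM⟩, -⟩, hLR, hMR⟩
    exact ⟨⟨hLR, hL⟩, hMR, hM⟩
  · rintro ⟨⟨hLR, hL⟩, hMR, hM⟩
    exact ⟨⟨⟨hL, hM⟩, (hMR.mono_right hLR).symm⟩, hLR, hMR⟩

lemma card_disjointPairs_mul_le_sum {α : Type*} [Fintype α] (f : α → Finset ι) {k d : ℕ}
    (hf : ∀ p ∈ disjointPairs ι k, d ≤ #{x | p.1 ⊆ f x ∧ Disjoint p.2 (f x)}) :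
    #(disjointPairs ι k) * d ≤ ∑ x, (#(f x)).choose k * (Fintype.card ι - #(f x)).choose k :=
  calc #(disjointPairs ι k) * d
      ≤ ∑ p ∈ disjointPairs ι k, #{x | p.1 ⊆ f x ∧ Disjoint p.2 (f x)} := by
        rw [← smul_eq_mul]; exact card_nsmul_le_sum _ _ _ hf
    _ = ∑ x, #{p ∈ disjointPairs ι k | p.1 ⊆ f x ∧ Disjoint p.2 (f x)} :=
        sum_card_bipartiteAbove_eq_sum_card_bipartiteBelow _
    _ = _ := by simp only [filter_disjointPairs_eq_product, card_product, card_powersetCard,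
        card_compl]

end DisjointPairs

lemma choose_le_card_filter_powersetCard {ι : Type*} [Fintype ι] [DecidableEq ι] {A C : Finset ι}
    (hAC : Disjoint A C) {m : ℕ} (hA : #A ≤ m) :
    (Fintype.card ι - #A - #C).choose (m - #A) ≤
      #{S ∈ powersetCard m univ | A ⊆ S ∧ Disjoint C S} := by
  have hcard : #(A ∪ C)ᶜ = Fintype.card ι - #A - #C := by
    rw [card_compl, card_union_of_disjoint hAC, Nat.sub_sub]
  rw [← hcard, ← card_powersetCard]
  refine card_le_card_of_injOn (· ∪ A) (fun T hT => ?_) (fun T₁ h₁ T₂ h₂ h => ?_)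
  · rw [mem_coe, mem_powersetCard, subset_compl_iff_disjoint_right, disjoint_union_right] at hT
    rw [mem_coe, mem_filter, mem_powersetCard]
    exact ⟨⟨subset_univ _, by rw [card_union_of_disjoint hT.1.1]; omega⟩, subset_union_right,
      disjoint_union_right.2 ⟨hT.1.2.symm, hAC.symm⟩⟩
  · rw [mem_coe, mem_powersetCard, subset_compl_iff_disjoint_right, disjoint_union_right] at h₁ h₂
    rw [← union_sdiff_cancel_right h₁.1.1, ← union_sdiff_cancel_right h₂.1.1]
    exact congrArg (· \ A) h

lemma choose_mul_choose_succ_le (k : ℕ) {a b : ℕ} (hab : a ≤ b) :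
    a.choose k * (b + 1).choose k ≤ (a + 1).choose k * b.choose k := by
  rcases lt_or_ge a k with hak | hka
  · simp [Nat.choose_eq_zero_of_lt hak]
  -- the ratio `(n + 1).choose k / n.choose k = (n + 1) / (n + 1 - k)` decreases in `n`
  have hpos : 0 < (a + 1) * (b + 1 - k) := Nat.mul_pos (by omega) (by omega)
  refine Nat.le_of_mul_le_mul_right ?_ hpos
  calc a.choose k * (b + 1).choose k * ((a + 1) * (b + 1 - k))
      = (a.choose k * (a + 1)) * ((b + 1).choose k * (b + 1 - k)) := by ring
    _ = (a + 1).choose k * b.choose k * ((a + 1 - k) * (b + 1)) := by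
        rw [Nat.choose_mul_succ_eq, ← Nat.choose_mul_succ_eq b]; ring
    _ ≤ (a + 1).choose k * b.choose k * ((a + 1) * (b + 1 - k)) := by
        refine Nat.mul_le_mul_left _ ?_
        zify [hka.trans (Nat.le_succ a), (hka.trans hab).trans (Nat.le_succ b)]
        nlinarith

lemma choose_mul_choose_add_two_mul_le (k a d : ℕ) :
    a.choose k * (a + 2 * d).choose k ≤ (a + d).choose k ^ 2 := by
  induction d generalizing a with
  | zero => simp [sq]
  | succ d ih =>
    calc a.choose k * (a + 2 * (d + 1)).choose k
        = a.choose k * (a + 1 + 2 * d + 1).choose k := by ring_nf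
      _ ≤ (a + 1).choose k * (a + 1 + 2 * d).choose k := choose_mul_choose_succ_le k (by omega)
      _ ≤ (a + 1 + d).choose k ^ 2 := ih (a + 1)
      _ = (a + (d + 1)).choose k ^ 2 := by ring_nf

lemma choose_mul_choose_sub_le (k : ℕ) {m s : ℕ} (hs : s ≤ 2 * m) :
    s.choose k * (2 * m - s).choose k ≤ m.choose k ^ 2 := by
  rcases le_total s m with h | h
  · obtain ⟨d, rfl⟩ := Nat.exists_eq_add_of_le h
    convert choose_mul_choose_add_two_mul_le k s d using 3
    omega
  · obtain ⟨d, rfl⟩ := Nat.exists_eq_add_of_le h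
    rw [mul_comm]
    convert choose_mul_choose_add_two_mul_le k (m - d) d using 3 <;> omega

lemma choose_two_mul_mul_choose_sq {k t : ℕ} (hkt : k ≤ t) :
    (2 * t).choose t * t.choose k ^ 2
      = (2 * t - 2 * k).choose (t - k) * ((2 * t).choose k * (2 * t - k).choose k) := by
  have h₁ := Nat.choose_mul (n := 2 * t) hkt
  have h₂ := Nat.choose_mul (n := 2 * t - k) hkt
  have h₃ : (2 * t - k).choose (t - k) = (2 * t - k).choose t :=
    Nat.choose_symm_of_eq_add (by omega)
  rw [show 2 * t - k - k = 2 * t - 2 * k by omega] at h₂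
  rw [sq, ← mul_assoc, h₁, mul_assoc, h₃, h₂]
  ring

theorem ExistsCFF.choose_le {k t n : ℕ} (hkt : k ≤ t)
    (h : ExistsCFF k k ((2 * t - 2 * k).choose (t - k)) n (2 * t)) : (2 * t).choose t ≤ n := by
  obtain ⟨f, hf⟩ := h.exists_rows
  have hcount := card_disjointPairs_mul_le_sum f (k := k) fun p hp => by
    simp only [disjointPairs, mem_filter, mem_product, mem_powersetCard] at hp
    exact hf p.1 p.2 hp.2 hp.1.1.2 hp.1.2.2
  have hpos : 0 < t.choose k ^ 2 := pow_pos (Nat.choose_pos hkt) 2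
  refine Nat.le_of_mul_le_mul_right ?_ hpos
  calc (2 * t).choose t * t.choose k ^ 2
      = #(disjointPairs (Fin (2 * t)) k) * (2 * t - 2 * k).choose (t - k) := by
        rw [card_disjointPairs, choose_two_mul_mul_choose_sq hkt, Fintype.card_fin, mul_comm]
    _ ≤ ∑ x, (#(f x)).choose k * (2 * t - #(f x)).choose k := by simpa using hcount
    _ ≤ ∑ _x : Fin n, t.choose k ^ 2 :=
        sum_le_sum fun x _ => choose_mul_choose_sub_le k (card_le_univ (f x) |>.trans_eq (by simp))
    _ = n * t.choose k ^ 2 := by simp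

theorem existsCFF_powersetCard {k t : ℕ} (hkt : k ≤ t) :
    ExistsCFF k k ((2 * t - 2 * k).choose (t - k)) ((2 * t).choose t) (2 * t) := by
  have hrows := existsCFF_of_rows (r := k) (w := k) (d := (2 * t - 2 * k).choose (t - k))
    (α := powersetCard t (univ : Finset (Fin (2 * t)))) Subtype.val fun L M hLM hL hM => ?_
  · simpa using hrows
  calc (2 * t - 2 * k).choose (t - k)
      = (Fintype.card (Fin (2 * t)) - #L - #M).choose (t - #L) := by
        rw [hL, hM, Fintype.card_fin, Nat.sub_sub, ← two_mul]
    _ ≤ #{S ∈ powersetCard t univ | L ⊆ S ∧ Disjoint M S} :=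
        choose_le_card_filter_powersetCard hLM (hL ▸ hkt)
    _ = #{x : powersetCard t (univ : Finset (Fin (2 * t))) | L ⊆ x.1 ∧ Disjoint M x.1} := by
        rw [← card_map (Function.Embedding.subtype (· ∈ powersetCard t univ))]
        congr 1
        ext S
        simp [and_comm, and_left_comm]

theorem stmt_2_general (k t : ℕ) (hkt : k ≤ t) :
    NCFF k k (Nat.choose (2 * t - 2 * k) (t - k)) (2 * t) = Nat.choose (2 * t) t :=
  le_antisymm (Nat.sInf_le (existsCFF_powersetCard hkt))
    (le_csInf ⟨_, existsCFF_powersetCard hkt⟩ fun _ hn => hn.choose_le hkt)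

theorem stmt_2 (k t : ℕ) (hk : 1 ≤ k) (hkt : k ≤ t) :
    NCFF k k (Nat.choose (2 * t - 2 * k) (t - k)) (2 * t) = Nat.choose (2 * t) t :=
  stmt_2_general k t hkt
end

section
/- Let 1 ≤ k ≤ t be integers and d = C(2t−2k, t−k). Then the d-biclique covering number and the d-biclique partition number of the Kneser graph KG(2t,k) both equal (1/2)·C(2t,t), i.e., bc_d(KG(2t,k)) = bp_d(KG(2t,k)) = C(2t,t)/2. -/
open Finset

/-- The vertex set of the Kneser graph `KG(n,k)`: all `k`-subsets of
`{1,…,n}`.  Two vertices are adjacent iff they are disjoint as sets. -/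
abbrev KneserVert (n k : ℕ) := {A : Finset (Fin n) // A.card = k}

/-- A family of `c` bicliques (complete bipartite subgraphs) of the Kneser
graph `KG(n,k)`: each biclique is given by two disjoint sets `X i`, `Y i` of
vertices, every vertex of `X i` being adjacent (disjoint as a set) to every
vertex of `Y i`. -/
def IsKneserBicliqueFamily (n k c : ℕ) (X Y : Fin c → Finset (KneserVert n k)) : Prop :=
  ∀ i : Fin c, Disjoint (X i) (Y i) ∧ ∀ a ∈ X i, ∀ b ∈ Y i, Disjoint a.1 b.1

/-- The edge `{a,b}` of the Kneser graph belongs to the biclique `(X,Y)`. -/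
def KneserEdgeMem (n k : ℕ) (X Y : Finset (KneserVert n k))
    (a b : KneserVert n k) : Prop :=
  (a ∈ X ∧ b ∈ Y) ∨ (b ∈ X ∧ a ∈ Y)

instance (n k : ℕ) (X Y : Finset (KneserVert n k)) (a b : KneserVert n k) :
    Decidable (KneserEdgeMem n k X Y a b) := by
  unfold KneserEdgeMem; infer_instance

/-- `bc_d(KG(n,k))`: the minimum number of bicliques of the Kneser graph
`KG(n,k)` such that every edge belongs to at least `d` of them. -/
noncomputable def bcKneser (n k d : ℕ) : ℕ :=
  sInf {c : ℕ | ∃ X Y : Fin c → Finset (KneserVert n k),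
    IsKneserBicliqueFamily n k c X Y ∧
    ∀ a b : KneserVert n k, Disjoint a.1 b.1 →
      d ≤ (Finset.univ.filter (fun i =>
        KneserEdgeMem n k (X i) (Y i) a b)).card}

/-- `bp_d(KG(n,k))`: the minimum number of bicliques of the Kneser graph
`KG(n,k)` such that every edge belongs to exactly `d` of them. -/
noncomputable def bpKneser (n k d : ℕ) : ℕ :=
  sInf {c : ℕ | ∃ X Y : Fin c → Finset (KneserVert n k),
    IsKneserBicliqueFamily n k c X Y ∧
    ∀ a b : KneserVert n k, Disjoint a.1 b.1 →
      (Finset.univ.filter (fun i =>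
        KneserEdgeMem n k (X i) (Y i) a b)).card = d}

/-!
A biclique `(X, Y)` of `KG(2t, k)` lives on two disjoint ground sets `A ⊇ ⋃ X` and `B ⊇ ⋃ Y`,
so by log-concavity of `m ↦ C(m, k)` it contains at most `2 C(t, k)²` ordered edges. The graph
has `C(2t, k) C(2t - k, k)` ordered edges, each to be covered `d` times, and
`d C(2t, k) C(2t - k, k) = C(2t, t) C(t, k)²`; hence at least `C(2t, t) / 2` bicliques are needed.

Conversely, for each `t`-set `S` containing a fixed point take the biclique
(`k`-subsets of `S`, `k`-subsets of `Sᶜ`). An edge `{a, b}` lies in it iff `S` or `Sᶜ` separates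
`a` from `b`, and exactly `C(2t - 2k, t - k)` of the `t`-sets `S` satisfy `a ⊆ S ⊆ bᶜ`.
-/

namespace Nat

lemma choose_succ_mul_choose_le_choose_mul_choose_succ (k : ℕ) {a b : ℕ} (hba : b ≤ a) :
    (a + 1).choose k * b.choose k ≤ a.choose k * (b + 1).choose k := by
  rcases lt_or_ge b k with hbk | hkb
  · simp [choose_eq_zero_of_lt hbk]
  have hpos : 0 < (a + 1 - k) * (b + 1) := Nat.mul_pos (by omega) (by omega)
  refine Nat.le_of_mul_le_mul_right ?_ hpos
  have hab : (a + 1) * (b + 1 - k) ≤ (a + 1 - k) * (b + 1) := by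
    zify [show k ≤ b + 1 by omega, show k ≤ a + 1 by omega]
    nlinarith
  calc (a + 1).choose k * b.choose k * ((a + 1 - k) * (b + 1))
      = ((a + 1).choose k * (a + 1 - k)) * (b.choose k * (b + 1)) := by ring
    _ = a.choose k * (b + 1).choose k * ((a + 1) * (b + 1 - k)) := by
      rw [← choose_mul_succ_eq a k, choose_mul_succ_eq b k]; ring
    _ ≤ a.choose k * (b + 1).choose k * ((a + 1 - k) * (b + 1)) := by gcongr

lemma choose_mul_choose_le_choose_mul_choose (k : ℕ) {a b m : ℕ} (h : a + b ≤ 2 * m) :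
    a.choose k * b.choose k ≤ m.choose k * m.choose k := by
  wlog hba : b ≤ a generalizing a b
  · rw [mul_comm]; exact this (by omega) (by omega)
  obtain ⟨d, hd⟩ : ∃ d, a - b = d := ⟨_, rfl⟩
  induction d using Nat.strong_induction_on generalizing a b with
  | _ d ih =>
  rcases le_or_gt a m with ham | hma
  · exact Nat.mul_le_mul (choose_le_choose k ham) (choose_le_choose k (hba.trans ham))
  obtain ⟨a, rfl⟩ : ∃ a', a = a' + 1 := ⟨a - 1, by omega⟩
  calc (a + 1).choose k * b.choose k ≤ a.choose k * (b + 1).choose k :=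
        choose_succ_mul_choose_le_choose_mul_choose_succ k (by omega)
    _ ≤ m.choose k * m.choose k := ih (a - (b + 1)) (by omega) (by omega) (by omega) rfl

lemma choose_sub_mul_choose_mul_choose (k : ℕ) {t : ℕ} (hkt : k ≤ t) :
    (2 * t - 2 * k).choose (t - k) * ((2 * t).choose k * (2 * t - k).choose k) =
      (2 * t).choose t * (t.choose k * t.choose k) := by
  have h1 := choose_mul (n := 2 * t) (k := t) (s := k) hkt
  have h2 := choose_mul (n := 2 * t - k) (k := t) (s := k) hkt
  have h3 : (2 * t - k).choose t = (2 * t - k).choose (t - k) := by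
    rw [← choose_symm (by omega)]; congr 1; omega
  rw [show 2 * t - k - k = 2 * t - 2 * k by omega, h3] at h2
  calc _ = (2 * t).choose k * ((2 * t - 2 * k).choose (t - k) * (2 * t - k).choose k) := by ring
    _ = (2 * t).choose k * ((2 * t - k).choose (t - k) * t.choose k) := by rw [h2]; ring
    _ = _ := by rw [← mul_assoc, ← h1]; ring

lemma two_mul_choose_two_mul_add_one (s : ℕ) :
    2 * (2 * s + 1).choose s = (2 * (s + 1)).choose (s + 1) := by
  rw [show 2 * (s + 1) = 2 * s + 1 + 1 by ring, choose_succ_succ', two_mul,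
    ← choose_symm_half]

end Nat

lemma card_filter_powersetCard_subset_subset_compl {α : Type*} [Fintype α] [DecidableEq α]
    {a b : Finset α} (hab : Disjoint a b) {m : ℕ} (ham : #a ≤ m) :
    #{S ∈ powersetCard m univ | a ⊆ S ∧ b ⊆ Sᶜ} = (Fintype.card α - #b - #a).choose (m - #a) := by
  have hfilter : {S ∈ powersetCard m (univ : Finset α) | a ⊆ S ∧ b ⊆ Sᶜ} =
      {S ∈ powersetCard m bᶜ | a ⊆ S} := by
    ext S
    simp only [mem_filter, mem_powersetCard, subset_univ, true_and, subset_compl_comm (t := b)]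
    tauto
  rw [hfilter, card_filter_powersetCard_subset a _ m (subset_compl_iff_disjoint_right.2 hab) ham,
    card_compl]

lemma card_filter_powersetCard_mem {α : Type*} [Fintype α] [DecidableEq α] {t : ℕ}
    (hα : Fintype.card α = 2 * t) (ht : 1 ≤ t) (z : α) :
    #{S ∈ powersetCard t (univ : Finset α) | z ∈ S} = (2 * t).choose t / 2 := by
  obtain ⟨s, rfl⟩ : ∃ s, t = s + 1 := ⟨t - 1, by omega⟩
  simp_rw [← singleton_subset_iff]
  rw [card_filter_powersetCard_subset _ _ _ (subset_univ _) (by simp), card_univ, hα,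
    card_singleton, ← Nat.two_mul_choose_two_mul_add_one]
  simp [show 2 * (s + 1) - 1 = 2 * s + 1 by omega]

lemma card_filter_powersetCard_mem_subset_compl_or {α : Type*} [Fintype α] [DecidableEq α]
    {t : ℕ} (hα : Fintype.card α = 2 * t) (z : α) {a b : Finset α} (ha : a.Nonempty) :
    #{S ∈ powersetCard t (univ : Finset α) | z ∈ S ∧ ((a ⊆ S ∧ b ⊆ Sᶜ) ∨ (b ⊆ S ∧ a ⊆ Sᶜ))} =
      #{S ∈ powersetCard t (univ : Finset α) | a ⊆ S ∧ b ⊆ Sᶜ} := by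
  have hnot (S : Finset α) (h : a ⊆ S) : ¬ a ⊆ Sᶜ := fun h' =>
    ha.ne_empty (subset_empty.1 (by simpa using subset_inter h h'))
  have hcompl (S : Finset α) : #Sᶜ = t ↔ #S = t := by
    have := card_le_univ S
    rw [card_compl, hα]; omega
  refine card_bij' (fun S _ => if a ⊆ S then S else Sᶜ) (fun T _ => if z ∈ T then T else Tᶜ)
    (fun S hS => ?_) (fun T hT => ?_) (fun S hS => ?_) (fun T hT => ?_) <;>
  simp only [mem_filter, mem_powersetCard_univ] at * <;>
  split_ifs <;> grind [compl_compl, mem_compl]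

lemma card_filter_equiv_apply {ι κ : Type*} [Fintype ι] (P : Finset κ) (e : ι ≃ P)
    (q : κ → Prop) [DecidablePred q] : #{i | q (e i)} = #{S ∈ P | q S} :=
  card_bij (fun i _ => (e i).1) (fun i hi => mem_filter.2 ⟨(e i).2, (mem_filter.1 hi).2⟩)
    (fun i _ j _ h => e.injective (Subtype.ext h))
    fun S hS => ⟨e.symm ⟨S, (mem_filter.1 hS).1⟩, by simpa using (mem_filter.1 hS).2, by simp⟩

section Kneser

variable {n k : ℕ}

def kneserVertsIn (k : ℕ) (S : Finset (Fin n)) : Finset (KneserVert n k) := {a | a.1 ⊆ S}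

@[simp]
lemma mem_kneserVertsIn {S : Finset (Fin n)} {a : KneserVert n k} :
    a ∈ kneserVertsIn k S ↔ a.1 ⊆ S := by
  simp [kneserVertsIn]

lemma card_kneserVertsIn (S : Finset (Fin n)) : #(kneserVertsIn k S) = (#S).choose k := by
  rw [← card_powersetCard]
  refine card_nbij (fun a => a.1) (fun a ha => ?_) (fun a _ b _ h => Subtype.ext h) fun T hT => ?_
  · simpa [mem_powersetCard, a.2] using ha
  · rw [mem_coe, mem_powersetCard] at hT
    exact ⟨⟨T, hT.2⟩, by simpa using hT.1, rfl⟩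

lemma card_mul_card_le_of_forall_disjoint {m : ℕ} (hn : n ≤ 2 * m) {X Y : Finset (KneserVert n k)}
    (hXY : ∀ a ∈ X, ∀ b ∈ Y, Disjoint a.1 b.1) :
    #X * #Y ≤ m.choose k * m.choose k := by
  set A := X.sup Subtype.val
  set B := Y.sup Subtype.val
  have hAB : Disjoint A B :=
    Finset.disjoint_sup_left.2 fun a ha => Finset.disjoint_sup_right.2 (hXY a ha)
  have hX : X ⊆ kneserVertsIn k A := fun a ha => mem_kneserVertsIn.2 (le_sup ha)
  have hY : Y ⊆ kneserVertsIn k B := fun b hb => mem_kneserVertsIn.2 (le_sup hb)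
  calc #X * #Y ≤ (#A).choose k * (#B).choose k := by
        rw [← card_kneserVertsIn, ← card_kneserVertsIn]
        exact Nat.mul_le_mul (card_le_card hX) (card_le_card hY)
    _ ≤ m.choose k * m.choose k := by
        refine Nat.choose_mul_choose_le_choose_mul_choose k ?_
        rw [← card_union_of_disjoint hAB]
        exact (card_le_univ _).trans (by simpa using hn)

def kneserArcs (n k : ℕ) : Finset (KneserVert n k × KneserVert n k) :=
  {p | Disjoint p.1.1 p.2.1}

lemma card_kneserArcs : #(kneserArcs n k) = n.choose k * (n - k).choose k := by
  have hnbhd (a : KneserVert n k) :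
      #{b : KneserVert n k | Disjoint a.1 b.1} = (n - k).choose k := by
    simp_rw [disjoint_comm (a := a.1), ← subset_compl_iff_disjoint_right]
    change #(kneserVertsIn k (a.1)ᶜ) = _
    rw [card_kneserVertsIn, card_compl, Fintype.card_fin, a.2]
  rw [kneserArcs, card_filter, Fintype.sum_prod_type]
  simp_rw [← card_filter, hnbhd]
  simp

lemma card_filter_kneserEdgeMem_le (X Y : Finset (KneserVert n k)) :
    #{p : KneserVert n k × KneserVert n k | KneserEdgeMem n k X Y p.1 p.2} ≤ 2 * (#X * #Y) := by
  calc _ ≤ #(X ×ˢ Y ∪ Y ×ˢ X) := by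
        refine card_le_card fun p hp => ?_
        rcases (mem_filter.1 hp).2 with h | h <;> simp [h]
    _ ≤ #(X ×ˢ Y) + #(Y ×ˢ X) := card_union_le _ _
    _ = 2 * (#X * #Y) := by rw [card_product, card_product]; ring

lemma mul_card_kneserArcs_le {c d : ℕ} (X Y : Fin c → Finset (KneserVert n k))
    (hcov : ∀ a b : KneserVert n k, Disjoint a.1 b.1 →
      d ≤ #{i | KneserEdgeMem n k (X i) (Y i) a b}) :
    d * #(kneserArcs n k) ≤ ∑ i, 2 * (#(X i) * #(Y i)) := by
  let r (p : KneserVert n k × KneserVert n k) (i : Fin c) := KneserEdgeMem n k (X i) (Y i) p.1 p.2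
  calc d * #(kneserArcs n k) = ∑ _p ∈ kneserArcs n k, d := by rw [sum_const, smul_eq_mul, mul_comm]
    _ ≤ ∑ p ∈ kneserArcs n k, #(univ.bipartiteAbove r p) :=
        sum_le_sum fun p hp => hcov p.1 p.2 (mem_filter.1 hp).2
    _ = ∑ i, #((kneserArcs n k).bipartiteBelow r i) :=
        sum_card_bipartiteAbove_eq_sum_card_bipartiteBelow r
    _ ≤ ∑ i, 2 * (#(X i) * #(Y i)) :=
        sum_le_sum fun i _ => (card_le_card (filter_subset_filter _ (subset_univ _))).trans
          (card_filter_kneserEdgeMem_le (X i) (Y i))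

lemma IsKneserBicliqueFamily.choose_two_mul_div_two_le {t c : ℕ}
    {X Y : Fin c → Finset (KneserVert (2 * t) k)}
    (hfam : IsKneserBicliqueFamily (2 * t) k c X Y) (hkt : k ≤ t)
    (hcov : ∀ a b : KneserVert (2 * t) k, Disjoint a.1 b.1 →
      (2 * t - 2 * k).choose (t - k) ≤ #{i | KneserEdgeMem (2 * t) k (X i) (Y i) a b}) :
    (2 * t).choose t / 2 ≤ c := by
  have hcount := mul_card_kneserArcs_le X Y hcov
  rw [card_kneserArcs, Nat.choose_sub_mul_choose_mul_choose k hkt] at hcount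
  have hbiclique : ∑ i, 2 * (#(X i) * #(Y i)) ≤ 2 * c * (t.choose k * t.choose k) := by
    refine (sum_le_card_nsmul univ _ (2 * (t.choose k * t.choose k)) fun i _ =>
      Nat.mul_le_mul_left 2 (card_mul_card_le_of_forall_disjoint le_rfl (hfam i).2)).trans_eq ?_
    rw [card_univ, Fintype.card_fin, smul_eq_mul]; ring
  have hpos : 0 < t.choose k * t.choose k := Nat.mul_pos (Nat.choose_pos hkt) (Nat.choose_pos hkt)
  have := Nat.le_of_mul_le_mul_right (hcount.trans hbiclique) hpos
  omega

lemma disjoint_kneserVertsIn_compl (hk : 1 ≤ k) (S : Finset (Fin n)) :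
    Disjoint (kneserVertsIn k S) (kneserVertsIn k Sᶜ) := by
  refine disjoint_left.2 fun a haS haSc => ?_
  obtain ⟨x, hx⟩ : a.1.Nonempty := card_pos.1 (by rw [a.2]; omega)
  exact mem_compl.1 (mem_kneserVertsIn.1 haSc hx) (mem_kneserVertsIn.1 haS hx)

lemma disjoint_of_mem_kneserVertsIn_compl {S : Finset (Fin n)} {a b : KneserVert n k}
    (ha : a ∈ kneserVertsIn k S) (hb : b ∈ kneserVertsIn k Sᶜ) : Disjoint a.1 b.1 :=
  disjoint_of_subset_left (mem_kneserVertsIn.1 ha)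
    (subset_compl_iff_disjoint_left.1 (mem_kneserVertsIn.1 hb))

lemma kneserEdgeMem_kneserVertsIn_compl_iff {S : Finset (Fin n)} {a b : KneserVert n k} :
    KneserEdgeMem n k (kneserVertsIn k S) (kneserVertsIn k Sᶜ) a b ↔
      (a.1 ⊆ S ∧ b.1 ⊆ Sᶜ) ∨ (b.1 ⊆ S ∧ a.1 ⊆ Sᶜ) := by
  simp [KneserEdgeMem]

lemma exists_kneserBicliqueFamily_card_eq {t : ℕ} (hk : 1 ≤ k) (hkt : k ≤ t) :
    ∃ X Y : Fin ((2 * t).choose t / 2) → Finset (KneserVert (2 * t) k),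
      IsKneserBicliqueFamily (2 * t) k ((2 * t).choose t / 2) X Y ∧
      ∀ a b : KneserVert (2 * t) k, Disjoint a.1 b.1 →
        #{i | KneserEdgeMem (2 * t) k (X i) (Y i) a b} = (2 * t - 2 * k).choose (t - k) := by
  -- `S` and `Sᶜ` give the same biclique, so only the `t`-sets containing `0` are used.
  let P : Finset (Finset (Fin (2 * t))) := {S ∈ powersetCard t univ | ⟨0, by omega⟩ ∈ S}
  have hP : #P = (2 * t).choose t / 2 :=
    card_filter_powersetCard_mem (Fintype.card_fin _) (by omega) _
  let e : Fin ((2 * t).choose t / 2) ≃ P := (finCongr hP.symm).trans P.equivFin.symm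
  refine ⟨fun i => kneserVertsIn k (e i).1, fun i => kneserVertsIn k (e i).1ᶜ,
    fun i => ⟨disjoint_kneserVertsIn_compl hk _, fun a ha b hb =>
      disjoint_of_mem_kneserVertsIn_compl ha hb⟩, fun a b hab => ?_⟩
  have ha : a.1.Nonempty := card_pos.1 (by rw [a.2]; omega)
  calc _ = #{S ∈ P | (a.1 ⊆ S ∧ b.1 ⊆ Sᶜ) ∨ (b.1 ⊆ S ∧ a.1 ⊆ Sᶜ)} := by
        simp_rw [kneserEdgeMem_kneserVertsIn_compl_iff]
        exact card_filter_equiv_apply P e fun S => (a.1 ⊆ S ∧ b.1 ⊆ Sᶜ) ∨ (b.1 ⊆ S ∧ a.1 ⊆ Sᶜ)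
    _ = #{S ∈ powersetCard t univ | a.1 ⊆ S ∧ b.1 ⊆ Sᶜ} := by
        rw [filter_filter]
        exact card_filter_powersetCard_mem_subset_compl_or (Fintype.card_fin _) _ ha
    _ = (2 * t - 2 * k).choose (t - k) := by
        rw [card_filter_powersetCard_subset_subset_compl hab (a.2.le.trans hkt), a.2, b.2,
          Fintype.card_fin, Nat.sub_sub, ← two_mul]

end Kneser

theorem stmt_4 (k t : ℕ) (hk : 1 ≤ k) (hkt : k ≤ t) :
    bcKneser (2 * t) k (Nat.choose (2 * t - 2 * k) (t - k)) =
        Nat.choose (2 * t) t / 2 ∧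
      bpKneser (2 * t) k (Nat.choose (2 * t - 2 * k) (t - k)) =
        Nat.choose (2 * t) t / 2 := by
  obtain ⟨X, Y, hfam, hexact⟩ := exists_kneserBicliqueFamily_card_eq hk hkt
  exact ⟨IsLeast.csInf_eq ⟨⟨X, Y, hfam, fun a b hab => (hexact a b hab).ge⟩,
      fun c ⟨_, _, hfam', hcov'⟩ => hfam'.choose_two_mul_div_two_le hkt hcov'⟩,
    IsLeast.csInf_eq ⟨⟨X, Y, hfam, hexact⟩, fun c ⟨_, _, hfam', hexact'⟩ =>
      hfam'.choose_two_mul_div_two_le hkt fun a b hab => (hexact' a b hab).ge⟩⟩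
end

section
/- Let G be a finite graph with t vertices whose minimum degree satisfies δ(G) > w, and suppose G admits a (w,d)-covering consisting of n sets. Then there exists a (1,w;d)-CFF(n,t); consequently N((1,w;d),t) ≤ N(G,w;d). -/
/-- `A` is a `(w,d)`-covering of the graph `G`: for every edge `{u,v}` of `G`
and every `w`-subset `W` of vertices disjoint from `{u,v}`, at least `d` of the
sets `A j` contain both `u` and `v` and are disjoint from `W`. -/
def IsCovering {V : Type*} [Fintype V] [DecidableEq V] (G : SimpleGraph V)
    (w d : ℕ) {n : ℕ} (A : Fin n → Finset V) : Prop :=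
  ∀ u v : V, G.Adj u v → ∀ W : Finset V, W.card = w → u ∉ W → v ∉ W →
    d ≤ (Finset.univ.filter
      (fun j => u ∈ A j ∧ v ∈ A j ∧ Disjoint W (A j))).card

/-- `N(G,w;d)`: the minimum number of sets in a `(w,d)`-covering of `G`. -/
noncomputable def NGraphCov {V : Type*} [Fintype V] [DecidableEq V]
    (G : SimpleGraph V) (w d : ℕ) : ℕ :=
  sInf {n : ℕ | ∃ A : Fin n → Finset V, IsCovering G w d A}

/-! Transposing a `(w,d)`-covering `A` of `G` gives the cover-free family whose block at a vertex `x`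
is `{j | x ∈ A j}`; the minimum degree condition supplies, for every `w`-set `W` avoiding `x`, an
edge at `x` leaving `W`, and the `d` covering sets of that edge separate `x` from `W`. -/

open Finset

lemma SimpleGraph.exists_adj_notMem_of_card_lt {V : Type*} [Fintype V] (G : SimpleGraph V)
    [DecidableRel G.Adj] {x : V} {W : Finset V} (h : #W < G.degree x) :
    ∃ u, G.Adj x u ∧ u ∉ W := by
  rw [← G.card_neighborFinset_eq_degree] at h
  obtain ⟨u, hu⟩ := exists_mem_notMem_of_card_lt_card h
  exact ⟨u, (G.mem_neighborFinset x u).mp hu.1, hu.2⟩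

def incidence {V : Type*} [DecidableEq V] {n : ℕ} (A : Fin n → Finset V) (x : V) :
    Finset (Fin n) :=
  univ.filter fun j => x ∈ A j

section

variable {V : Type*} [Fintype V] [DecidableEq V]

namespace IsCovering

variable {G : SimpleGraph V} [DecidableRel G.Adj] {w d n : ℕ} {A : Fin n → Finset V}

lemma le_card_incidence_sdiff (hA : IsCovering G w d A) {x : V} (hx : w < G.degree x)
    {W : Finset V} (hW : #W = w) (hxW : x ∉ W) :
    d ≤ #(incidence A x \ W.sup (incidence A)) := by
  obtain ⟨u, hxu, huW⟩ := G.exists_adj_notMem_of_card_lt (hW ▸ hx : #W < G.degree x)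
  refine (hA x u hxu W hW hxW huW).trans (card_le_card fun j hj => ?_)
  simp only [mem_filter, mem_univ, true_and] at hj
  obtain ⟨hxA, -, hWA⟩ := hj
  simp only [incidence, mem_sdiff, mem_filter, mem_univ, true_and, mem_sup, not_exists,
    not_and, hxA]
  exact fun y hy hyA => disjoint_left.mp hWA hy hyA

lemma existsCFF (hA : IsCovering G w d A) {t : ℕ} (ht : Fintype.card V = t)
    (hδ : ∀ v : V, w < G.degree v) : ExistsCFF 1 w d n t := by
  let e : V ≃ Fin t := Fintype.equivFinOfCardEq ht
  refine ⟨incidence A ∘ e.symm, fun L M hLM hL hM => ?_⟩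
  obtain ⟨i, rfl⟩ := card_eq_one.mp hL
  have hsup : M.sup (incidence A ∘ e.symm) = (M.map e.symm.toEmbedding).sup (incidence A) :=
    (sup_map M e.symm.toEmbedding (incidence A)).symm
  rw [inf_singleton, hsup]
  refine hA.le_card_incidence_sdiff (hδ _) (by simpa using hM) fun hi => ?_
  obtain ⟨k, hk, hki⟩ := mem_map.mp hi
  rw [e.symm.injective hki] at hk
  exact disjoint_singleton_left.mp hLM hk

end IsCovering

end

theorem stmt_7_general {V : Type*} [Fintype V] [DecidableEq V] (G : SimpleGraph V)
    [DecidableRel G.Adj] (w d n t : ℕ)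
    (ht : Fintype.card V = t) (hδ : ∀ v : V, w < G.degree v)
    (A : Fin n → Finset V) (hA : IsCovering G w d A) :
    ExistsCFF 1 w d n t ∧ NCFF 1 w d t ≤ NGraphCov G w d :=
  ⟨hA.existsCFF ht hδ, csInf_le_csInf (OrderBot.bddBelow _) ⟨n, A, hA⟩
    fun _ ⟨_, hA'⟩ => hA'.existsCFF ht hδ⟩

theorem stmt_7 {V : Type*} [Fintype V] [DecidableEq V] (G : SimpleGraph V)
    [DecidableRel G.Adj] (w d n t : ℕ) (hw : 0 < w) (hd : 0 < d)
    (ht : Fintype.card V = t) (hδ : ∀ v : V, w < G.degree v)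
    (A : Fin n → Finset V) (hA : IsCovering G w d A) :
    ExistsCFF 1 w d n t ∧ NCFF 1 w d t ≤ NGraphCov G w d :=
  stmt_7_general G w d n t ht hδ A hA
end

section
/- For all positive integers t₁, t₂, and d, the key pool number of the complete bipartite graph K_{t₁,t₂} satisfies N(K_{t₁,t₂},1;d) ≤ N((1,1;d),t₁) + N((1,1;d),t₂). -/
/-!
Transpose each `(1,1;d)`-CFF. A point `x` of the family `B₁` on the first part gives the key
pool `{a | x ∈ B₁ a} ∪ V₂`, and a point `y` of `B₂` gives `V₁ ∪ {b | y ∈ B₂ b}`. For an edge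
`{a, b}` and a forbidden vertex `a' ≠ a` in the first part, the pools containing both ends and
avoiding `a'` are exactly those of the points of `B₁ a \ B₁ a'`, so there are at least `d`;
a forbidden vertex in the second part is handled by `B₂` in the same way.
-/

open Finset

theorem existsCFF_one_one_iff {d n t : ℕ} :
    ExistsCFF 1 1 d n t ↔
      ∃ B : Fin t → Finset (Fin n), ∀ i i', i ≠ i' → d ≤ #(B i \ B i') := by
  refine exists_congr fun B => ⟨fun hB i i' hii' => ?_, fun hB L M hLM hL hM => ?_⟩
  · simpa using hB {i} {i'} (disjoint_singleton.mpr hii') rfl rfl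
  · obtain ⟨i, rfl⟩ := card_eq_one.mp hL
    obtain ⟨i', rfl⟩ := card_eq_one.mp hM
    simpa using hB i i' (disjoint_singleton.mp hLM)

theorem existsCFF_one_one_mul (d t : ℕ) : ExistsCFF 1 1 d (t * d) t := by
  rw [existsCFF_one_one_iff]
  let block (i : Fin t) : Finset (Fin (t * d)) :=
    univ.map ((Function.Embedding.sectR i (Fin d)).trans finProdFinEquiv.toEmbedding)
  refine ⟨block, fun i i' hii' => ?_⟩
  have hdisj : Disjoint (block i) (block i') := by
    simp [block, disjoint_left, hii'.symm]
  rw [sdiff_eq_self_of_disjoint hdisj, card_map, card_univ, Fintype.card_fin]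

-- Nonemptiness makes `sInf` attained rather than the junk value `0`.
theorem existsCFF_NCFF (d t : ℕ) : ExistsCFF 1 1 d (NCFF 1 1 d t) t :=
  Nat.sInf_mem (s := {n | ExistsCFF 1 1 d n t}) ⟨t * d, existsCFF_one_one_mul d t⟩

theorem NGraphCov_le_of_isCovering {V : Type*} [Fintype V] [DecidableEq V]
    {G : SimpleGraph V} {w d n : ℕ} {A : Fin n → Finset V} (hA : IsCovering G w d A) :
    NGraphCov G w d ≤ n :=
  Nat.sInf_le ⟨A, hA⟩

theorem card_filter_fin_add {m n : ℕ} (p : Fin (m + n) → Prop) [DecidablePred p] :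
    #{j | p j} = #{i | p (Fin.castAdd n i)} + #{i | p (Fin.natAdd m i)} := by
  simp only [card_filter, Fin.sum_univ_add]

section Pools

variable {α β : Type*} [Fintype α] [Fintype β] [DecidableEq α] [DecidableEq β]
  {n₁ n₂ : ℕ} (B₁ : α → Finset (Fin n₁)) (B₂ : β → Finset (Fin n₂))

def bipartitePools : Fin (n₁ + n₂) → Finset (α ⊕ β) :=
  Fin.addCases (fun x => ({a | x ∈ B₁ a} : Finset α).disjSum univ)
    (fun y => univ.disjSum ({b | y ∈ B₂ b} : Finset β))

variable {B₁ B₂} {d : ℕ}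

theorem card_filter_bipartitePools_inl (a a' : α) (b : β) :
    #{j | Sum.inl a ∈ bipartitePools B₁ B₂ j ∧ Sum.inr b ∈ bipartitePools B₁ B₂ j ∧
      Disjoint {Sum.inl a'} (bipartitePools B₁ B₂ j)} = #(B₁ a \ B₁ a') := by
  rw [sdiff_eq_filter, ← filter_univ_mem (B₁ a), filter_filter]
  simp [bipartitePools, card_filter_fin_add, disjoint_singleton_left]

theorem card_filter_bipartitePools_inr (a : α) (b b' : β) :
    #{j | Sum.inl a ∈ bipartitePools B₁ B₂ j ∧ Sum.inr b ∈ bipartitePools B₁ B₂ j ∧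
      Disjoint {Sum.inr b'} (bipartitePools B₁ B₂ j)} = #(B₂ b \ B₂ b') := by
  rw [sdiff_eq_filter, ← filter_univ_mem (B₂ b), filter_filter]
  simp [bipartitePools, card_filter_fin_add, disjoint_singleton_left]

theorem le_card_bipartitePools (hB₁ : ∀ a a', a ≠ a' → d ≤ #(B₁ a \ B₁ a'))
    (hB₂ : ∀ b b', b ≠ b' → d ≤ #(B₂ b \ B₂ b')) (a : α) (b : β) (w : α ⊕ β)
    (hwa : w ≠ Sum.inl a) (hwb : w ≠ Sum.inr b) :
    d ≤ #{j | Sum.inl a ∈ bipartitePools B₁ B₂ j ∧ Sum.inr b ∈ bipartitePools B₁ B₂ j ∧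
      Disjoint {w} (bipartitePools B₁ B₂ j)} := by
  rcases w with a' | b'
  · rw [card_filter_bipartitePools_inl]
    exact hB₁ a a' fun h => hwa (h ▸ rfl)
  · rw [card_filter_bipartitePools_inr]
    exact hB₂ b b' fun h => hwb (h ▸ rfl)

theorem isCovering_bipartitePools (hB₁ : ∀ a a', a ≠ a' → d ≤ #(B₁ a \ B₁ a'))
    (hB₂ : ∀ b b', b ≠ b' → d ≤ #(B₂ b \ B₂ b')) :
    IsCovering (completeBipartiteGraph α β) 1 d (bipartitePools B₁ B₂) := by
  intro u v huv W hW hu hv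
  obtain ⟨w, rfl⟩ := card_eq_one.mp hW
  rw [mem_singleton] at hu hv
  rcases u with a | b <;> rcases v with a' | b'
  · simp at huv
  · exact le_card_bipartitePools hB₁ hB₂ a b' w (Ne.symm hu) (Ne.symm hv)
  · simpa only [and_left_comm] using
      le_card_bipartitePools hB₁ hB₂ a' b w (Ne.symm hv) (Ne.symm hu)
  · simp at huv

end Pools

theorem stmt_9_general (t₁ t₂ d : ℕ) :
    NGraphCov (completeBipartiteGraph (Fin t₁) (Fin t₂)) 1 d ≤
      NCFF 1 1 d t₁ + NCFF 1 1 d t₂ := by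
  obtain ⟨B₁, hB₁⟩ := existsCFF_one_one_iff.mp (existsCFF_NCFF d t₁)
  obtain ⟨B₂, hB₂⟩ := existsCFF_one_one_iff.mp (existsCFF_NCFF d t₂)
  exact NGraphCov_le_of_isCovering (isCovering_bipartitePools hB₁ hB₂)

theorem stmt_9 (t₁ t₂ d : ℕ) (ht₁ : 0 < t₁) (ht₂ : 0 < t₂) (hd : 0 < d) :
    NGraphCov (completeBipartiteGraph (Fin t₁) (Fin t₂)) 1 d ≤
      NCFF 1 1 d t₁ + NCFF 1 1 d t₂ :=
  stmt_9_general t₁ t₂ d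
end

section
/- For every integer n ≥ 3, the key pool number of the cycle C_n equals the biclique covering number of the graph obtained from the complete bipartite graph K_{n,n} by removing the edges of a spanning (Hamiltonian) cycle of length 2n, i.e., N(C_n) = bc(K_{n,n} \ C_{2n}). -/
/-- The adjacency relation of the bipartite graph `K_{n,n} \ C_{2n}`, i.e.
the complete bipartite graph with parts two copies of `Fin n` from which the
edges of the Hamiltonian cycle
`l_0 r_0 l_1 r_1 … l_{n-1} r_{n-1} l_0` (of length `2n`) have been removed:
the left vertex `i` is adjacent to the right vertex `j` iff `j ≠ i` and
`j ≠ i + 1 (mod n)`. -/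
def KnnMinusCycleRel (n : ℕ) (i j : Fin n) : Prop :=
  j.val ≠ i.val ∧ j.val ≠ (i.val + 1) % n

instance (n : ℕ) (i j : Fin n) : Decidable (KnnMinusCycleRel n i j) := by
  unfold KnnMinusCycleRel; infer_instance

/-- The biclique covering number `bc(K_{n,n} \ C_{2n})`: the smallest number
of bicliques (each given by a set `X k` of left vertices and a set `Y k` of
right vertices, all cross pairs being adjacent) covering every edge of
`K_{n,n} \ C_{2n}`. -/
noncomputable def bcKnnMinusCycle (n : ℕ) : ℕ :=
  sInf {c : ℕ | ∃ X Y : Fin c → Finset (Fin n),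
    (∀ k : Fin c, ∀ a ∈ X k, ∀ b ∈ Y k, KnnMinusCycleRel n a b) ∧
    ∀ a b : Fin n, KnnMinusCycleRel n a b → ∃ k : Fin c, a ∈ X k ∧ b ∈ Y k}

/-!
A family `A` is a `(1,1)`-covering of `C_n` exactly when, for every edge `{a, a + 1}` and every
vertex `x` off it, some `A j` contains the edge and misses `x`. Reading the edge `{a, a + 1}` as the
left vertex `a`, the pairs `(a, x)` with `x ∉ {a, a + 1}` are precisely the edges of
`K_{n,n} \ C_{2n}`, and a single set `A j` yields the biclique (edges inside `A j`) × (vertices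
outside `A j`). Conversely a biclique `(X, Y)` is dominated by the one built from `A = Yᶜ`. Hence
coverings and biclique covers of the same size correspond, and the two minima agree.
-/

open SimpleGraph Finset

theorem isCovering_one_one_iff {V : Type*} [Fintype V] [DecidableEq V] {G : SimpleGraph V}
    {c : ℕ} {A : Fin c → Finset V} :
    IsCovering G 1 1 A ↔
      ∀ u v, G.Adj u v → ∀ x, x ≠ u → x ≠ v → ∃ j, u ∈ A j ∧ v ∈ A j ∧ x ∉ A j := by
  simp only [IsCovering, card_eq_one, forall_exists_index, forall_eq_apply_imp_iff,
    mem_singleton, Nat.one_le_iff_ne_zero, ne_eq, card_eq_zero, filter_eq_empty_iff,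
    disjoint_singleton_left]
  simp [eq_comm]

theorem cycleGraph_adj_iff_eq_add_one {n : ℕ} {u v : Fin (n + 2)} :
    (cycleGraph (n + 2)).Adj u v ↔ v = u + 1 ∨ u = v + 1 := by
  rw [cycleGraph_adj, sub_eq_iff_eq_add, sub_eq_iff_eq_add, add_comm 1, add_comm 1, or_comm]

theorem isCovering_cycleGraph_iff {n c : ℕ} {A : Fin c → Finset (Fin (n + 2))} :
    IsCovering (cycleGraph (n + 2)) 1 1 A ↔
      ∀ a x, x ≠ a → x ≠ a + 1 → ∃ j, a ∈ A j ∧ a + 1 ∈ A j ∧ x ∉ A j := by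
  rw [isCovering_one_one_iff]
  constructor
  · intro hA a x hxa hxa'
    exact hA a (a + 1) (cycleGraph_adj_iff_eq_add_one.mpr (.inl rfl)) x hxa hxa'
  · intro hA u v huv x hxu hxv
    rcases cycleGraph_adj_iff_eq_add_one.mp huv with rfl | rfl
    · exact hA u x hxu hxv
    · obtain ⟨j, hv, hu, hx⟩ := hA v x hxv hxu
      exact ⟨j, hu, hv, hx⟩

theorem knnMinusCycleRel_iff {n : ℕ} [NeZero n] {a x : Fin n} :
    KnnMinusCycleRel n a x ↔ x ≠ a ∧ x ≠ a + 1 := by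
  simp [KnnMinusCycleRel, Fin.ext_iff, Fin.val_add]

def IsKnnMinusCycleBicliqueCover (n : ℕ) {c : ℕ} (X Y : Fin c → Finset (Fin n)) : Prop :=
  (∀ k, ∀ a ∈ X k, ∀ b ∈ Y k, KnnMinusCycleRel n a b) ∧
    ∀ a b, KnnMinusCycleRel n a b → ∃ k, a ∈ X k ∧ b ∈ Y k

theorem isKnnMinusCycleBicliqueCover_of_isCovering {n c : ℕ} {A : Fin c → Finset (Fin (n + 2))}
    (hA : IsCovering (cycleGraph (n + 2)) 1 1 A) :
    IsKnnMinusCycleBicliqueCover (n + 2) (fun k => {a | a ∈ A k ∧ a + 1 ∈ A k})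
      (fun k => (A k)ᶜ) := by
  rw [isCovering_cycleGraph_iff] at hA
  refine ⟨fun k a ha b hb => ?_, fun a b hab => ?_⟩
  · simp only [mem_filter, mem_univ, true_and] at ha
    rw [mem_compl] at hb
    exact knnMinusCycleRel_iff.mpr ⟨by rintro rfl; exact hb ha.1, by rintro rfl; exact hb ha.2⟩
  · obtain ⟨hba, hba'⟩ := knnMinusCycleRel_iff.mp hab
    obtain ⟨j, ha, ha', hb⟩ := hA a b hba hba'
    exact ⟨j, by simp [ha, ha'], mem_compl.mpr hb⟩

theorem isCovering_compl_of_isKnnMinusCycleBicliqueCover {n c : ℕ}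
    {X Y : Fin c → Finset (Fin (n + 2))} (hXY : IsKnnMinusCycleBicliqueCover (n + 2) X Y) :
    IsCovering (cycleGraph (n + 2)) 1 1 (fun k => (Y k)ᶜ) := by
  obtain ⟨hbiclique, hcover⟩ := hXY
  rw [isCovering_cycleGraph_iff]
  intro a x hxa hxa'
  obtain ⟨k, ha, hx⟩ := hcover a x (knnMinusCycleRel_iff.mpr ⟨hxa, hxa'⟩)
  refine ⟨k, mem_compl.mpr fun h => ?_, mem_compl.mpr fun h => ?_, by simpa using hx⟩
  · exact (knnMinusCycleRel_iff.mp (hbiclique k a ha a h)).1 rfl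
  · exact (knnMinusCycleRel_iff.mp (hbiclique k a ha (a + 1) h)).2 rfl

theorem stmt_12 (n : ℕ) (hn : 3 ≤ n) :
    NGraphCov (SimpleGraph.cycleGraph n) 1 1 = bcKnnMinusCycle n := by
  obtain ⟨m, rfl⟩ : ∃ m, n = m + 2 := ⟨n - 2, by omega⟩
  unfold NGraphCov bcKnnMinusCycle
  congr 1
  ext c
  exact ⟨fun ⟨_, hA⟩ => ⟨_, _, isKnnMinusCycleBicliqueCover_of_isCovering hA⟩,
    fun ⟨_, _, hXY⟩ => ⟨_, isCovering_compl_of_isKnnMinusCycleBicliqueCover hXY⟩⟩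
end

section
/- If G is a star graph with t+1 vertices (one center joined to t leaves) and t ≥ w+1, then N(G,w;d) = N((1,w;d),t). -/
/-- The star graph with `t + 1` vertices: the center `none` is joined to the
`t` leaves `some i`, and there are no other edges. -/
def starGraph (t : ℕ) : SimpleGraph (Option (Fin t)) where
  Adj x y := x ≠ y ∧ (x = none ∨ y = none)
  symm := by
    refine ⟨?_⟩
    rintro x y ⟨h, h'⟩
    exact ⟨h.symm, h'.symm⟩
  loopless := by refine ⟨?_⟩; rintro x ⟨h, -⟩; exact h rfl

/-!
STATEMENT 14: If G is a star graph with t+1 vertices (one center joined to t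
leaves) and t ≥ w+1, then N(G,w;d) = N((1,w;d),t).
-/

/-! Every forbidden set `W` avoids the center of the star, so a family `A` is a `(w,d)`-covering
exactly when the blocks `B i = {j | A j ∋ center, leaf i}` form a `(1,w;d)`-CFF; conversely
any CFF `B` arises this way from `A j = {center} ∪ {i | j ∈ B i}`. -/

open Finset

def IsCFF (r w d : ℕ) {n t : ℕ} (B : Fin t → Finset (Fin n)) : Prop :=
  ∀ L M : Finset (Fin t), Disjoint L M → L.card = r → M.card = w →
    d ≤ ((L.inf B) \ (M.sup B)).card

lemma isCFF_one_iff {w d n t : ℕ} (B : Fin t → Finset (Fin n)) :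
    IsCFF 1 w d B ↔ ∀ i M, i ∉ M → #M = w → d ≤ #(B i \ M.sup B) := by
  refine ⟨fun hB i M hi hM => ?_, fun hB L M hLM hL hM => ?_⟩
  · simpa using hB {i} M (disjoint_singleton_left.2 hi) (card_singleton i) hM
  · obtain ⟨i, rfl⟩ := card_eq_one.1 hL
    simpa using hB i M (disjoint_singleton_left.1 hLM) hM

def leafBlocks {n t : ℕ} (A : Fin n → Finset (Option (Fin t))) (i : Fin t) : Finset (Fin n) :=
  {j | none ∈ A j ∧ some i ∈ A j}

def starCovering {n t : ℕ} (B : Fin t → Finset (Fin n)) (j : Fin n) : Finset (Option (Fin t)) :=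
  insertNone {i | j ∈ B i}

lemma leafBlocks_starCovering {n t : ℕ} (B : Fin t → Finset (Fin n)) :
    leafBlocks (starCovering B) = B := by
  ext i j
  simp [leafBlocks, starCovering]

lemma card_leafBlocks_sdiff {n t : ℕ} (A : Fin n → Finset (Option (Fin t))) (i : Fin t)
    (M : Finset (Fin t)) :
    #(leafBlocks A i \ M.sup (leafBlocks A)) =
      #{j | none ∈ A j ∧ some i ∈ A j ∧ Disjoint (M.map .some) (A j)} := by
  congr 1
  ext j
  simp only [leafBlocks, mem_sdiff, mem_sup, mem_filter, mem_univ, true_and, not_exists,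
    disjoint_left, mem_map, Function.Embedding.some_apply, forall_exists_index, and_imp,
    forall_apply_eq_imp_iff₂]
  grind

lemma isCovering_starGraph_iff {w d n t : ℕ} (A : Fin n → Finset (Option (Fin t))) :
    IsCovering (starGraph t) w d A ↔ IsCFF 1 w d (leafBlocks A) := by
  rw [isCFF_one_iff]
  refine ⟨fun hA i M hi hM => ?_, fun hA u v huv W hW hu hv => ?_⟩
  · rw [card_leafBlocks_sdiff]
    exact hA none (some i) ⟨by simp, .inl rfl⟩ _ (by simpa using hM) (by simp) (by simpa using hi)
  · have edge (i : Fin t) (hi : some i ∉ W) (hnone : none ∉ W) :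
        d ≤ #{j | none ∈ A j ∧ some i ∈ A j ∧ Disjoint W (A j)} := by
      have hW' : W.eraseNone.map .some = W := by
        rw [map_some_eraseNone, erase_eq_of_notMem hnone]
      rw [← hW', ← card_leafBlocks_sdiff]
      refine hA i _ (by simpa using hi) ?_
      rwa [← card_map, hW']
    obtain ⟨hne, rfl | rfl⟩ := huv
    · obtain ⟨i, rfl⟩ := Option.ne_none_iff_exists'.1 hne.symm
      exact edge i hv hu
    · obtain ⟨i, rfl⟩ := Option.ne_none_iff_exists'.1 hne
      simpa only [and_left_comm] using edge i hu hv

theorem stmt_14_general (t w d : ℕ) :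
    NGraphCov (starGraph t) w d = NCFF 1 w d t := by
  unfold NGraphCov NCFF
  congr 1
  ext n
  refine ⟨fun ⟨A, hA⟩ => ⟨leafBlocks A, (isCovering_starGraph_iff A).1 hA⟩, fun ⟨B, hB⟩ => ?_⟩
  refine ⟨starCovering B, (isCovering_starGraph_iff _).2 ?_⟩
  rwa [leafBlocks_starCovering]

theorem stmt_14 (t w d : ℕ) (hw : 0 < w) (hd : 0 < d) (ht : w + 1 ≤ t) :
    NGraphCov (starGraph t) w d = NCFF 1 w d t :=
  stmt_14_general t w d
end

section
/- Let T be a tree with m edges and maximum degree Δ, and let t be the number of vertices of T of degree at least 3. Then the key pool number of T satisfies N(T) ≤ 2⌈log₂ m⌉ + R(Δ) + t, where R(Δ) = min{c ∈ ℕ : C(c,⌊c/2⌋) ≥ Δ}. -/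
/-- `R(t)`: the smallest nonnegative integer `c` with `C(c,⌊c/2⌋) ≥ t`. -/
noncomputable def RSperner (t : ℕ) : ℕ :=
  sInf {c : ℕ | t ≤ Nat.choose c (c / 2)}

open Finset

def gray (n : ℕ) : ℕ := n ^^^ n / 2

lemma testBit_gray (n i : ℕ) : (gray n).testBit i = (n.testBit i ^^ n.testBit (i + 1)) := by
  rw [gray, Nat.testBit_xor, Nat.testBit_div_two]

lemma gray_div_two (n : ℕ) : gray (n / 2) = gray n / 2 :=
  Nat.eq_of_testBit_eq fun i => by simp only [testBit_gray, Nat.testBit_div_two]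

lemma testBit_succ_gray (n j : ℕ) : (gray n).testBit (j + 1) = (gray (n / 2)).testBit j := by
  rw [Nat.testBit_succ, gray_div_two]

lemma testBit_zero_gray (n : ℕ) : (gray n).testBit 0 = (n.testBit 0 ^^ (n / 2).testBit 0) := by
  rw [testBit_gray, Nat.testBit_succ]

lemma gray_xor_div_two (n : ℕ) : gray n ^^^ n / 2 = n := by
  rw [gray, Nat.xor_assoc, Nat.xor_self, Nat.xor_zero]

lemma gray_lt_two_pow {n L : ℕ} (h : n < 2 ^ L) : gray n < 2 ^ L :=
  Nat.xor_lt_two_pow h (lt_of_le_of_lt (Nat.div_le_self n 2) h)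

lemma gray_injective : Function.Injective gray := by
  have key : ∀ N a b, a < 2 ^ N → b < 2 ^ N → gray a = gray b → a = b := by
    intro N
    induction N with
    | zero => intro a b ha hb _; omega
    | succ N ih =>
      intro a b ha hb h
      have hdiv : a / 2 = b / 2 :=
        ih _ _ (by omega) (by omega) (by rw [gray_div_two, gray_div_two, h])
      rw [← gray_xor_div_two a, ← gray_xor_div_two b, h, hdiv]
  exact fun a b h => key (a + b) a b (by have := Nat.lt_two_pow_self (n := a + b); omega)
    (by have := Nat.lt_two_pow_self (n := a + b); omega) h

lemma gray_succ (n : ℕ) : ∃ k, gray (n + 1) = gray n ^^^ 2 ^ k := by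
  induction n using Nat.strong_induction_on with
  | _ n ih =>
  rcases Nat.even_or_odd' n with ⟨a, rfl | rfl⟩
  · refine ⟨0, Nat.eq_of_testBit_eq fun j => ?_⟩
    have h1 : (2 * a + 1) / 2 = a := by omega
    have h2 : 2 * a / 2 = a := by omega
    rw [Nat.testBit_xor, Nat.testBit_two_pow]
    cases j with
    | zero =>
      rw [testBit_zero_gray, testBit_zero_gray, h1, h2, Nat.testBit_zero, Nat.testBit_zero]
      simp
    | succ j => rw [testBit_succ_gray, testBit_succ_gray, h1, h2]; simp
  · obtain ⟨k, hk⟩ := ih a (by omega)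
    refine ⟨k + 1, Nat.eq_of_testBit_eq fun j => ?_⟩
    have h1 : (2 * a + 1 + 1) / 2 = a + 1 := by omega
    have h2 : (2 * a + 1) / 2 = a := by omega
    rw [Nat.testBit_xor, Nat.testBit_two_pow]
    cases j with
    | zero =>
      rw [testBit_zero_gray, testBit_zero_gray, h1, h2, Nat.testBit_zero, Nat.testBit_zero,
        Nat.testBit_zero, Nat.testBit_zero]
      rcases Nat.mod_two_eq_zero_or_one a with h | h <;> simp [h, Nat.add_mod]
    | succ j =>
      rw [testBit_succ_gray, testBit_succ_gray, h1, h2, hk, Nat.testBit_xor, Nat.testBit_two_pow]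
      simp

namespace Nat

theorem lt_of_testBit_ne {a b L i : ℕ} (ha : a < 2 ^ L) (hb : b < 2 ^ L)
    (h : a.testBit i ≠ b.testBit i) : i < L := by
  by_contra! hi
  have hL : 2 ^ L ≤ 2 ^ i := Nat.pow_le_pow_right two_pos hi
  exact h (by rw [testBit_lt_two_pow (ha.trans_le hL), testBit_lt_two_pow (hb.trans_le hL)])

theorem exists_testBit_ne_of_ne_of_ne_xor_two_pow {a x k : ℕ} (h₁ : a ≠ x)
    (h₂ : a ≠ x ^^^ 2 ^ k) : ∃ i ≠ k, a.testBit i ≠ x.testBit i := by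
  by_contra! h
  by_cases hk : a.testBit k = x.testBit k
  · exact h₁ (eq_of_testBit_eq fun i => if hi : i = k then hi ▸ hk else h i hi)
  · refine h₂ (eq_of_testBit_eq fun i => ?_)
    rw [testBit_xor, testBit_two_pow]
    by_cases hi : i = k
    · subst hi; simpa [Bool.eq_not] using hk
    · simp [h i hi, Ne.symm hi]

end Nat

def shiftInsert {α : Type*} [DecidableEq α] (pos : α → ℕ) (a : α) (p : ℕ) (e : α) : ℕ :=
  if e = a then p else if pos e < p then pos e else pos e + 1

section shiftInsert

variable {α : Type*} [DecidableEq α] {pos : α → ℕ} {a : α} {p : ℕ}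

lemma shiftInsert_self : shiftInsert pos a p a = p := if_pos rfl

lemma shiftInsert_of_ne {e : α} (he : e ≠ a) :
    shiftInsert pos a p e = if pos e < p then pos e else pos e + 1 := if_neg he

lemma injOn_shiftInsert {s : Finset α} (hinj : Set.InjOn pos s) (ha : a ∉ s) :
    Set.InjOn (shiftInsert pos a p) ↑(insert a s) := by
  have key : ∀ e ∈ s, shiftInsert pos a p e ≠ p := fun e he => by
    rw [shiftInsert_of_ne (ne_of_mem_of_not_mem he ha)]; split_ifs <;> omega
  intro e he f hf hef
  simp only [coe_insert, Set.mem_insert_iff, mem_coe] at he hf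
  rcases he with rfl | he <;> rcases hf with rfl | hf
  · rfl
  · exact absurd (hef.symm.trans shiftInsert_self) (key f hf)
  · exact absurd (hef.trans shiftInsert_self) (key e he)
  · rw [shiftInsert_of_ne (ne_of_mem_of_not_mem he ha),
      shiftInsert_of_ne (ne_of_mem_of_not_mem hf ha)] at hef
    exact hinj he hf (by split_ifs at hef <;> omega)

lemma shiftInsert_lt {s : Finset α} (hlt : ∀ e ∈ s, pos e < #s) (hp : p ≤ #s) :
    ∀ e ∈ insert a s, shiftInsert pos a p e < #s + 1 := by
  intro e he
  by_cases hea : e = a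
  · rw [hea, shiftInsert_self]; omega
  · have := hlt e ((mem_insert.mp he).resolve_left hea)
    rw [shiftInsert_of_ne hea]; split_ifs <;> omega

lemma shiftInsert_succ {f g : α} (hf : f ≠ a) (hg : g ≠ a) (hfg : pos g = pos f + 1)
    (hp : p ≠ pos g) : shiftInsert pos a p g = shiftInsert pos a p f + 1 := by
  rw [shiftInsert_of_ne hf, shiftInsert_of_ne hg]; split_ifs <;> omega

end shiftInsert

section

variable {V : Type*}

namespace SimpleGraph

variable {G : SimpleGraph V}

lemma IsAcyclic.exists_existsUnique_adj [Finite V] (hG : G.IsAcyclic) {a b : V}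
    (hab : G.Adj a b) : ∃ v, ∃! w, G.Adj v w := by
  have : Nonempty V := ⟨a⟩
  obtain ⟨u, v, p, hp, hmax⟩ := Walk.exists_isPath_forall_isPath_length_le_length G
  have hnil : ¬p.Nil := fun h => by
    simpa [h.length_eq_zero] using hmax _ _ _ (Path.singleton hab).2
  refine ⟨u, p.snd, p.adj_snd hnil, fun w hw => hG.eq_snd_of_adj_start hp hw ?_⟩
  by_contra hws
  simpa using hmax _ _ _ (hp.cons hws (h := hw.symm))

lemma IsAcyclic.exists_leaf_edge [Finite V] (hG : G.IsAcyclic)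
    {s : Finset (Sym2 V)} (hs : (s : Set (Sym2 V)) ⊆ G.edgeSet) (hne : s.Nonempty) :
    ∃ v w, s(v, w) ∈ s ∧ ∀ e ∈ s, v ∈ e → e = s(v, w) := by
  set H := fromEdgeSet (s : Set (Sym2 V))
  have hH : H.IsAcyclic := hG.anti (fun x y hxy => hs (fromEdgeSet_adj _ |>.mp hxy).1)
  have hadj : ∀ {x y}, s(x, y) ∈ s → H.Adj x y := fun h =>
    (fromEdgeSet_adj _).mpr ⟨h, G.ne_of_adj (hs h)⟩
  obtain ⟨e, he⟩ := hne
  induction e using Sym2.ind with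
  | _ a b =>
  obtain ⟨v, w, hvw, hunique⟩ := hH.exists_existsUnique_adj (hadj he)
  refine ⟨v, w, ((fromEdgeSet_adj _).mp hvw).1, fun e he hve => ?_⟩
  obtain ⟨z, rfl⟩ := Sym2.mem_iff_exists.mp hve
  rw [hunique z (hadj he)]

end SimpleGraph

variable [DecidableEq V]

structure IsConsecutiveNumbering (s : Finset (Sym2 V)) (pos : Sym2 V → ℕ) : Prop where
  injOn : Set.InjOn pos s
  lt_card : ∀ e ∈ s, pos e < #s
  consecutive : ∀ x, #{e ∈ s | x ∈ e} = 2 →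
    ∃ f ∈ s, ∃ g ∈ s, x ∈ f ∧ x ∈ g ∧ pos g = pos f + 1

namespace IsConsecutiveNumbering

variable {s : Finset (Sym2 V)} {pos : Sym2 V → ℕ}

lemma insert_shiftInsert (h : IsConsecutiveNumbering s pos) {a : Sym2 V} (ha : a ∉ s) {p : ℕ}
    (hp : p ≤ #s)
    (hsplit : ∀ x, x ∉ a → #{e ∈ s | x ∈ e} = 2 → ∀ f ∈ s, ∀ g ∈ s,
      x ∈ f → x ∈ g → pos g = pos f + 1 → p ≠ pos g)
    (hends : ∀ x ∈ a, #{e ∈ insert a s | x ∈ e} = 2 → ∃ f ∈ insert a s, ∃ g ∈ insert a s,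
      x ∈ f ∧ x ∈ g ∧ shiftInsert pos a p g = shiftInsert pos a p f + 1) :
    IsConsecutiveNumbering (insert a s) (shiftInsert pos a p) where
  injOn := injOn_shiftInsert h.injOn ha
  lt_card := by rw [card_insert_of_notMem ha]; exact shiftInsert_lt h.lt_card hp
  consecutive x hx := by
    by_cases hxa : x ∈ a
    · exact hends x hxa hx
    rw [filter_insert, if_neg hxa] at hx
    obtain ⟨f, hf, g, hg, hxf, hxg, hfg⟩ := h.consecutive x hx
    exact ⟨f, mem_insert_of_mem hf, g, mem_insert_of_mem hg, hxf, hxg,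
      shiftInsert_succ (ne_of_mem_of_not_mem hf ha) (ne_of_mem_of_not_mem hg ha) hfg
        (hsplit x hxa hx f hf g hg hxf hxg hfg)⟩

lemma card_filter_insert_eq_one {a : Sym2 V} {x : V} (hx : x ∈ a) (hs : ∀ e ∈ s, x ∉ e) :
    #{e ∈ insert a s | x ∈ e} = 1 := by
  rw [filter_insert, if_pos hx, filter_eq_empty_iff.mpr hs]; rfl

lemma exists_insert_beside (h : IsConsecutiveNumbering s pos) {v w z : V} (hv : ∀ e ∈ s, v ∉ e)
    (hwz : s(w, z) ∈ s) : ∃ pos', IsConsecutiveNumbering (insert s(v, w) s) pos' := by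
  have ha : s(v, w) ∉ s := fun h' => hv _ h' (Sym2.mem_mk_left v w)
  have hne : s(w, z) ≠ s(v, w) := ne_of_mem_of_not_mem hwz ha
  have hends : ∀ x ∈ s(v, w), #{e ∈ insert s(v, w) s | x ∈ e} = 2 → x = w := by
    intro x hx hx2
    rcases Sym2.mem_iff.mp hx with rfl | rfl
    · rw [card_filter_insert_eq_one hx hv] at hx2; omega
    · rfl
  have hz : ∀ x ∈ s(w, z), x ∉ s(v, w) → x = z := fun x hx hxa =>
    (Sym2.mem_iff.mp hx).resolve_left fun hxw => hxa (hxw ▸ Sym2.mem_mk_right v w)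
  -- `s(v, w)` goes right after `s(w, z)`, or right before it if an edge at `z` follows it
  -- (then no edge at `z` precedes it, `z` having degree at most two).
  by_cases hnext : ∃ g ∈ s, z ∈ g ∧ pos g = pos s(w, z) + 1
  · obtain ⟨g', hg', hzg', hg'pos⟩ := hnext
    refine ⟨_, h.insert_shiftInsert ha (p := pos s(w, z)) (h.lt_card _ hwz).le ?_ ?_⟩
    · intro x hxa hx2 f hf g hg hxf hxg hfg hpg
      obtain rfl : g = s(w, z) := h.injOn hg hwz hpg.symm
      obtain rfl := hz x hxg hxa
      have hsub : ({f, s(w, x), g'} : Finset _) ⊆ {e ∈ s | x ∈ e} := by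
        intro e he
        simp only [mem_insert, mem_singleton] at he
        rcases he with rfl | rfl | rfl <;> simp [*]
      have := card_le_card hsub
      rw [card_eq_three.mpr ⟨f, s(w, x), g', ne_of_apply_ne pos (by omega),
        ne_of_apply_ne pos (by omega), ne_of_apply_ne pos (by omega), rfl⟩] at this
      omega
    · intro x hx hx2
      obtain rfl := hends x hx hx2
      refine ⟨s(v, x), mem_insert_self _ _, s(x, z), mem_insert_of_mem hwz,
        Sym2.mem_mk_right _ _, Sym2.mem_mk_left _ _, ?_⟩
      rw [shiftInsert_self, shiftInsert_of_ne hne, if_neg (lt_irrefl _)]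
  · push Not at hnext
    refine ⟨_, h.insert_shiftInsert ha (p := pos s(w, z) + 1) (h.lt_card _ hwz) ?_ ?_⟩
    · intro x hxa _ f hf g hg hxf hxg hfg hpg
      obtain rfl : f = s(w, z) := h.injOn hf hwz (by omega)
      obtain rfl := hz x hxf hxa
      exact hnext g hg hxg (by omega)
    · intro x hx hx2
      obtain rfl := hends x hx hx2
      refine ⟨s(x, z), mem_insert_of_mem hwz, s(v, x), mem_insert_self _ _,
        Sym2.mem_mk_left _ _, Sym2.mem_mk_right _ _, ?_⟩
      rw [shiftInsert_self, shiftInsert_of_ne hne, if_pos (Nat.lt_succ_self _)]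

lemma exists_insert_leaf (h : IsConsecutiveNumbering s pos) {v w : V} (hv : ∀ e ∈ s, v ∉ e) :
    ∃ pos', IsConsecutiveNumbering (insert s(v, w) s) pos' := by
  by_cases hw : ∃ e ∈ s, w ∈ e
  · obtain ⟨e, he, hwe⟩ := hw
    obtain ⟨z, rfl⟩ := Sym2.mem_iff_exists.mp hwe
    exact h.exists_insert_beside hv he
  push Not at hw
  refine ⟨_, h.insert_shiftInsert (fun h' => hv _ h' (Sym2.mem_mk_left v w)) (p := 0)
    (Nat.zero_le _) (fun _ _ _ _ _ _ _ _ _ hfg => by omega) fun x hx hx2 => ?_⟩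
  rcases Sym2.mem_iff.mp hx with rfl | rfl
  · rw [card_filter_insert_eq_one hx hv] at hx2; omega
  · rw [card_filter_insert_eq_one hx hw] at hx2; omega

lemma exists_testBit_gray_ne (h : IsConsecutiveNumbering s pos) {e : Sym2 V} (he : e ∈ s)
    {x : V} (hx : x ∉ e) (h₁ : 1 ≤ #{f ∈ s | x ∈ f}) (h₂ : #{f ∈ s | x ∈ f} ≤ 2) :
    ∃ i < Nat.clog 2 #s, ∀ f ∈ s, x ∈ f →
      (gray (pos f)).testBit i ≠ (gray (pos e)).testBit i := by
  have hlt : ∀ f ∈ s, gray (pos f) < 2 ^ Nat.clog 2 #s := fun f hf =>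
    gray_lt_two_pow ((h.lt_card f hf).trans_le (Nat.le_pow_clog one_lt_two _))
  have hne : ∀ f ∈ s, x ∈ f → gray (pos f) ≠ gray (pos e) := fun f hf hxf hfe =>
    ne_of_mem_of_not_mem' hxf hx (h.injOn hf he (gray_injective hfe))
  rcases (by omega : #{f ∈ s | x ∈ f} = 1 ∨ #{f ∈ s | x ∈ f} = 2) with hx1 | hx2
  · obtain ⟨f₀, hf₀⟩ := card_eq_one.mp hx1
    obtain ⟨hf₀s, hxf₀⟩ := mem_filter.mp (hf₀ ▸ mem_singleton_self f₀)
    obtain ⟨i, hi⟩ := Nat.exists_testBit_ne_of_ne (hne f₀ hf₀s hxf₀)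
    refine ⟨i, Nat.lt_of_testBit_ne (hlt _ hf₀s) (hlt _ he) hi, fun f hf hxf => ?_⟩
    obtain rfl : f = f₀ := mem_singleton.mp (hf₀ ▸ mem_filter.mpr ⟨hf, hxf⟩)
    exact hi
  · obtain ⟨f, hf, g, hg, hxf, hxg, hfg⟩ := h.consecutive x hx2
    obtain ⟨k, hk⟩ := gray_succ (pos f)
    rw [← hfg] at hk
    obtain ⟨i, hik, hi⟩ :=
      Nat.exists_testBit_ne_of_ne_of_ne_xor_two_pow (hne f hf hxf).symm (hk ▸ (hne g hg hxg).symm)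
    have hgi : (gray (pos g)).testBit i = (gray (pos f)).testBit i := by
      rw [hk, Nat.testBit_xor, Nat.testBit_two_pow, decide_eq_false (Ne.symm hik), Bool.xor_false]
    have hfg' : f ≠ g := ne_of_apply_ne pos (by omega)
    have hpair : {f ∈ s | x ∈ f} = {f, g} := (eq_of_subset_of_card_le (by
      intro f' hf'
      simp only [mem_insert, mem_singleton] at hf'
      rcases hf' with rfl | rfl <;> simp [*]) (by rw [hx2, card_pair hfg'])).symm
    refine ⟨i, Nat.lt_of_testBit_ne (hlt _ he) (hlt _ hf) hi, fun f' hf' hxf' => ?_⟩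
    have := hpair ▸ mem_filter.mpr ⟨hf', hxf'⟩
    simp only [mem_insert, mem_singleton] at this
    rcases this with rfl | rfl
    · exact Ne.symm hi
    · exact hgi ▸ Ne.symm hi

end IsConsecutiveNumbering

namespace SimpleGraph

variable {G : SimpleGraph V}

theorem IsAcyclic.exists_isConsecutiveNumbering [Finite V] (hG : G.IsAcyclic)
    (s : Finset (Sym2 V)) (hs : (s : Set (Sym2 V)) ⊆ G.edgeSet) :
    ∃ pos, IsConsecutiveNumbering s pos := by
  induction s using Finset.strongInduction with
  | H s ih =>
  rcases s.eq_empty_or_nonempty with rfl | hne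
  · exact ⟨0, by simp, by simp, by simp⟩
  obtain ⟨v, w, hvw, hleaf⟩ := hG.exists_leaf_edge hs hne
  obtain ⟨pos, hpos⟩ := ih _ (erase_ssubset hvw) ((coe_subset.mpr (erase_subset _ _)).trans hs)
  rw [← insert_erase hvw]
  exact hpos.exists_insert_leaf fun e he hve =>
    (mem_erase.mp he).1 (hleaf e (mem_of_mem_erase he) hve)

end SimpleGraph

lemma NGraphCov_one_one_le_card [Fintype V] {G : SimpleGraph V} (𝒜 : Finset (Finset V))
    (h : ∀ u v, G.Adj u v → ∀ x, x ≠ u → x ≠ v → ∃ A ∈ 𝒜, u ∈ A ∧ v ∈ A ∧ x ∉ A) :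
    NGraphCov G 1 1 ≤ #𝒜 := by
  refine Nat.sInf_le ⟨fun j => 𝒜.equivFin.symm j, fun u v huv W hW hu hv => ?_⟩
  obtain ⟨x, rfl⟩ := card_eq_one.mp hW
  obtain ⟨A, hA, huA, hvA, hxA⟩ := h u v huv x (fun hxu => hu (hxu ▸ mem_singleton_self x))
    fun hxv => hv (hxv ▸ mem_singleton_self x)
  refine one_le_card.mpr ⟨𝒜.equivFin ⟨A, hA⟩, ?_⟩
  simpa [huA, hvA] using hxA

section KeyPool

variable [Fintype V] (T : SimpleGraph V) [DecidableRel T.Adj]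

def keyPool (pos : Sym2 V → ℕ) : Finset (Finset V) :=
  ((range (Nat.clog 2 #T.edgeFinset) ×ˢ (univ : Finset Bool)).image fun ib =>
      ({y | ∃ e ∈ T.edgeFinset, y ∈ e ∧ (gray (pos e)).testBit ib.1 = ib.2} : Finset V)) ∪
    ({x | 3 ≤ T.degree x} : Finset V).image fun x => univ.erase x

lemma card_keyPool_le (pos : Sym2 V → ℕ) :
    #(keyPool T pos) ≤ 2 * Nat.clog 2 #T.edgeFinset + #{x | 3 ≤ T.degree x} := by
  calc #(keyPool T pos)
      ≤ #(range (Nat.clog 2 #T.edgeFinset) ×ˢ (univ : Finset Bool)) + #{x | 3 ≤ T.degree x} :=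
        (card_union_le _ _).trans (add_le_add card_image_le card_image_le)
    _ = _ := by simp [mul_comm]

variable {T}

lemma SimpleGraph.IsTree.exists_mem_keyPool (hT : T.IsTree) {pos : Sym2 V → ℕ}
    (hpos : IsConsecutiveNumbering T.edgeFinset pos) {u v : V} (huv : T.Adj u v) (x : V)
    (hxu : x ≠ u) (hxv : x ≠ v) : ∃ A ∈ keyPool T pos, u ∈ A ∧ v ∈ A ∧ x ∉ A := by
  by_cases hx3 : 3 ≤ T.degree x
  · exact ⟨univ.erase x, mem_union_right _ (mem_image_of_mem _ (by simpa using hx3)),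
      by simpa using hxu.symm, by simpa using hxv.symm, notMem_erase x _⟩
  have hdeg : #{e ∈ T.edgeFinset | x ∈ e} = T.degree x := by
    rw [← T.card_incidenceFinset_eq_degree, T.incidenceFinset_eq_filter]
  have hdeg_pos : 0 < T.degree x := (hT.connected.preconnected x u).degree_pos_left hxu
  have he : s(u, v) ∈ T.edgeFinset := T.mem_edgeFinset.mpr huv
  obtain ⟨i, hi, hsep⟩ := hpos.exists_testBit_gray_ne he (x := x) (by simp [hxu, hxv])
    (by omega) (by omega)
  refine ⟨_, mem_union_left _ (mem_image.mpr ⟨(i, (gray (pos s(u, v))).testBit i),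
    by simpa using hi, rfl⟩), ?_, ?_, ?_⟩
  · simp only [mem_filter, mem_univ, true_and]
    exact ⟨s(u, v), he, Sym2.mem_mk_left u v, rfl⟩
  · simp only [mem_filter, mem_univ, true_and]
    exact ⟨s(u, v), he, Sym2.mem_mk_right u v, rfl⟩
  · simpa using hsep

end KeyPool

end

theorem stmt_15_general {V : Type*} [Fintype V] [DecidableEq V] (T : SimpleGraph V)
    [DecidableRel T.Adj] (hT : T.IsTree) (m Δ t : ℕ)
    (hm : T.edgeFinset.card = m)
    (ht : (Finset.univ.filter (fun v : V => 3 ≤ T.degree v)).card = t) :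
    NGraphCov T 1 1 ≤ 2 * Nat.clog 2 m + RSperner Δ + t := by
  obtain ⟨pos, hpos⟩ := hT.isAcyclic.exists_isConsecutiveNumbering T.edgeFinset (by simp)
  calc NGraphCov T 1 1 ≤ #(keyPool T pos) :=
        NGraphCov_one_one_le_card _ fun u v huv x => hT.exists_mem_keyPool hpos huv x
    _ ≤ 2 * Nat.clog 2 m + t := hm ▸ ht ▸ card_keyPool_le T pos
    _ ≤ 2 * Nat.clog 2 m + RSperner Δ + t := by omega

theorem stmt_15 {V : Type*} [Fintype V] [DecidableEq V] (T : SimpleGraph V)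
    [DecidableRel T.Adj] (hT : T.IsTree) (m Δ t : ℕ)
    (hm : T.edgeFinset.card = m) (hΔ : T.maxDegree = Δ)
    (ht : (Finset.univ.filter (fun v : V => 3 ≤ T.degree v)).card = t) :
    NGraphCov T 1 1 ≤ 2 * Nat.clog 2 m + RSperner Δ + t :=
  stmt_15_general T hT m Δ t hm ht
end

section
/- Let G be a finite graph with t vertices, m edges, and maximum degree Δ, and let w be a positive integer. For any real number p with 0 < p < 1, set q = 1 − p²(1−p)^w and D = m·C(t−2,w) − (m − (w+2)Δ)·C(t−w−4,w). Then N(G,w;1) ≤ ⌈log₂(e(D+1)) / (−log₂ q)⌉. -/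
open MeasureTheory ProbabilityTheory Finset unitInterval

lemma inv_exp_mul_le_inv_mul_one_sub_inv_pow (d : ℕ) :
    (Real.exp 1 * (d + 1))⁻¹ ≤ ((d : ℝ) + 2)⁻¹ * (1 - ((d : ℝ) + 2)⁻¹) ^ d := by
  have h := Real.one_add_inv_pow_le_exp (n := d + 1)
  rw [show (1 : ℝ) + ((d + 1 : ℕ) : ℝ)⁻¹ = (d + 2) / (d + 1) by push_cast; field_simp; ring,
    div_pow, div_le_iff₀ (by positivity)] at h
  rw [show (1 : ℝ) - ((d : ℝ) + 2)⁻¹ = (d + 1) / (d + 2) by field_simp; ring, div_pow,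
    inv_le_iff_one_le_mul₀ (by positivity)]
  calc (1 : ℝ) = ((d : ℝ) + 2) ^ (d + 1) / ((d : ℝ) + 2) ^ (d + 1) := by field_simp
    _ ≤ Real.exp 1 * ((d : ℝ) + 1) ^ (d + 1) / ((d : ℝ) + 2) ^ (d + 1) := by gcongr
    _ = _ := by field_simp; ring

section LocalLemma

variable {Ω J : Type*} {E : J → Set Ω}

def avoidSet (E : J → Set Ω) (T : Finset J) : Set Ω := ⋂ k ∈ T, (E k)ᶜ

lemma avoidSet_insert [DecidableEq J] (a : J) (T : Finset J) :
    avoidSet E (insert a T) = avoidSet E T \ E a := by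
  ext ω
  simp [avoidSet, and_comm]

lemma avoidSet_anti {T T' : Finset J} (h : T ⊆ T') : avoidSet E T' ⊆ avoidSet E T :=
  Set.biInter_subset_biInter_left (by simpa using h)

variable [MeasurableSpace Ω] {μ : Measure Ω} {x : ℝ}

lemma ProbabilityTheory.IndepSet.measureReal_inter_eq_mul {s t : Set Ω} (h : IndepSet s t μ) :
    μ.real (s ∩ t) = μ.real s * μ.real t := by
  simp [Measure.real, h.measure_inter_eq_mul]

variable [IsProbabilityMeasure μ]

lemma one_sub_mul_le_measureReal_avoidSet_insert [DecidableEq J] {a : J} {T : Finset J}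
    (ha : MeasurableSet (E a)) (h : μ.real (E a ∩ avoidSet E T) ≤ x * μ.real (avoidSet E T)) :
    (1 - x) * μ.real (avoidSet E T) ≤ μ.real (avoidSet E (insert a T)) := by
  have := measureReal_inter_add_sdiff (μ := μ) (s := avoidSet E T) ha
  rw [avoidSet_insert]
  rw [Set.inter_comm] at h
  linarith

lemma one_sub_pow_card_mul_le_measureReal_avoidSet_union [DecidableEq J]
    (hE : ∀ j, MeasurableSet (E j)) (hx : x ≤ 1) {S U : Finset J} (hSU : Disjoint S U)
    (h : ∀ T ⊂ S ∪ U, ∀ i ∉ T, μ.real (E i ∩ avoidSet E T) ≤ x * μ.real (avoidSet E T)) :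
    (1 - x) ^ #U * μ.real (avoidSet E S) ≤ μ.real (avoidSet E (S ∪ U)) := by
  induction U using Finset.induction_on with
  | empty => simp
  | insert a U ha ih =>
    have haSU : a ∉ S ∪ U := by
      simp only [mem_union, not_or]
      exact ⟨disjoint_right.1 hSU (mem_insert_self a U), ha⟩
    have hsub : S ∪ U ⊂ S ∪ insert a U := union_insert a S U ▸ ssubset_insert haSU
    have ih := ih (disjoint_of_subset_right (subset_insert a U) hSU)
      fun T hT => h T (hT.trans hsub)
    have hstep := one_sub_mul_le_measureReal_avoidSet_insert (hE a)
      (h _ hsub a haSU)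
    rw [card_insert_of_notMem ha, pow_succ, union_insert]
    calc (1 - x) ^ #U * (1 - x) * μ.real (avoidSet E S)
        = (1 - x) * ((1 - x) ^ #U * μ.real (avoidSet E S)) := by ring
      _ ≤ (1 - x) * μ.real (avoidSet E (S ∪ U)) := by gcongr
      _ ≤ _ := hstep

variable [DecidableEq J] (Γ : J → Finset J) {d : ℕ}

lemma measureReal_inter_avoidSet_le (hE : ∀ j, MeasurableSet (E j)) (hΓ : ∀ j, #(Γ j) ≤ d)
    (hindep : ∀ j (T : Finset J), j ∉ T → Disjoint T (Γ j) → IndepSet (E j) (avoidSet E T) μ)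
    (hx0 : 0 ≤ x) (hx1 : x ≤ 1) (hμE : ∀ j, μ.real (E j) ≤ x * (1 - x) ^ d) (T : Finset J) :
    ∀ i ∉ T, μ.real (E i ∩ avoidSet E T) ≤ x * μ.real (avoidSet E T) := by
  induction T using Finset.strongInduction with
  | H T ih =>
  intro i hi
  set T₁ := T.filter (· ∈ Γ i)
  set T₂ := T.filter (· ∉ Γ i)
  have hT : T₂ ∪ T₁ = T := by rw [union_comm]; exact filter_union_filter_not_eq _ T
  have hpeel := one_sub_pow_card_mul_le_measureReal_avoidSet_union hE hx1
    (disjoint_filter_filter_not T T _).symm (by rw [hT]; exact ih)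
  rw [hT] at hpeel
  have hT₁ : #T₁ ≤ d := (card_le_card fun k hk => (mem_filter.1 hk).2).trans (hΓ i)
  have hindep₂ : IndepSet (E i) (avoidSet E T₂) μ :=
    hindep i T₂ (fun h => hi (mem_filter.1 h).1) (disjoint_left.2 fun k hk => (mem_filter.1 hk).2)
  -- `E i` is independent of the events of `T₂`, and adding back the at most `d` events of `T₁`
  -- shrinks the avoiding set by a factor of at most `(1 - x) ^ #T₁` (`hpeel`).
  calc μ.real (E i ∩ avoidSet E T)
      ≤ μ.real (E i ∩ avoidSet E T₂) :=
        measureReal_mono (Set.inter_subset_inter_right _ (avoidSet_anti (filter_subset _ T)))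
    _ = μ.real (E i) * μ.real (avoidSet E T₂) := hindep₂.measureReal_inter_eq_mul
    _ ≤ x * (1 - x) ^ #T₁ * μ.real (avoidSet E T₂) := by
        refine mul_le_mul_of_nonneg_right ((hμE i).trans ?_) measureReal_nonneg
        exact mul_le_mul_of_nonneg_left (pow_le_pow_of_le_one (by linarith) (by linarith) hT₁) hx0
    _ ≤ x * μ.real (avoidSet E T) := by rw [mul_assoc]; gcongr

theorem measureReal_iInter_compl_pos_of_lovasz [Fintype J] (hE : ∀ j, MeasurableSet (E j))
    (hΓ : ∀ j, #(Γ j) ≤ d)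
    (hindep : ∀ j (T : Finset J), j ∉ T → Disjoint T (Γ j) → IndepSet (E j) (avoidSet E T) μ)
    (hx0 : 0 ≤ x) (hx1 : x < 1) (hμE : ∀ j, μ.real (E j) ≤ x * (1 - x) ^ d) :
    0 < μ.real (⋂ j, (E j)ᶜ) := by
  have h := one_sub_pow_card_mul_le_measureReal_avoidSet_union (μ := μ) hE hx1.le
    (disjoint_empty_left univ) fun T _ i hi =>
      measureReal_inter_avoidSet_le Γ hE hΓ hindep hx0 hx1.le hμE T i hi
  have hx : 0 < 1 - x := by linarith
  simp only [avoidSet, empty_union, mem_univ, Set.iInter_true, notMem_empty, Set.iInter_of_empty,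
    Set.iInter_univ, probReal_univ, mul_one] at h
  exact (pow_pos hx _).trans_le h

theorem exists_forall_notMem_of_lovasz [Fintype J] (hE : ∀ j, MeasurableSet (E j))
    (hΓ : ∀ j, #(Γ j) ≤ d)
    (hindep : ∀ j (T : Finset J), j ∉ T → Disjoint T (Γ j) → IndepSet (E j) (avoidSet E T) μ)
    (hμE : ∀ j, μ.real (E j) ≤ (Real.exp 1 * (d + 1))⁻¹) :
    ∃ ω, ∀ j, ω ∉ E j := by
  have hpos := measureReal_iInter_compl_pos_of_lovasz Γ hE hΓ hindep (by positivity)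
    (inv_lt_one_of_one_lt₀ (by linarith [d.cast_nonneg (α := ℝ)]))
    fun j => (hμE j).trans (inv_exp_mul_le_inv_mul_one_sub_inv_pow d)
  obtain ⟨ω, hω⟩ : (⋂ j, (E j)ᶜ).Nonempty :=
    Set.nonempty_iff_ne_empty.2 fun h => by simp [h] at hpos
  exact ⟨ω, Set.mem_iInter.1 hω⟩

end LocalLemma

section DependsOn

variable {ι J : Type*} {β : ι → Type*}

lemma dependsOn_mem_avoidSet {E : J → Set (∀ i, β i)} {S : J → Set ι}
    (hE : ∀ j, DependsOn (· ∈ E j) (S j)) (T : Finset J) :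
    DependsOn (· ∈ avoidSet E T) (⋃ k ∈ T, S k) := fun x y hxy => by
  simp only [avoidSet, Set.mem_iInter, Set.mem_compl_iff]
  refine propext (forall₂_congr fun k hk => ?_)
  exact not_congr (Iff.of_eq (hE k fun i hi => hxy i (Set.mem_biUnion hk hi)))

lemma restrict_preimage_image_of_dependsOn {s : Set (∀ i, β i)} {S : Finset ι}
    (hs : DependsOn (· ∈ s) S) : S.restrict ⁻¹' (S.restrict '' s) = s := by
  refine (Set.subset_preimage_image _ _).antisymm' fun x ⟨y, hy, hyx⟩ => ?_
  have := hs (x := y) (y := x) fun i hi => congrFun hyx ⟨i, hi⟩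
  simp only at this
  exact this ▸ hy

end DependsOn

section ProductMeasure

variable {ι J : Type*} [Fintype ι] {β : ι → Type*} [∀ i, MeasurableSpace (β i)]
  {ν : ∀ i, Measure (β i)} [∀ i, IsProbabilityMeasure (ν i)]

lemma measureReal_pi_setOf_forall_mem_eq [DecidableEq ι] (K : Finset ι) (b : ∀ i, β i) :
    (Measure.pi ν).real {ω | ∀ i ∈ K, ω i = b i} = ∏ i ∈ K, (ν i).real {b i} := by
  have : {ω : ∀ i, β i | ∀ i ∈ K, ω i = b i} =
      Set.univ.pi fun i => if i ∈ K then {b i} else Set.univ := by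
    ext ω
    simp only [Set.mem_ofPred_eq, Set.mem_pi, Set.mem_univ, true_implies]
    refine forall_congr' fun i => ?_
    split_ifs <;> simp [*]
  simp only [this, measureReal_def, Measure.pi_pi, apply_ite, measure_univ, prod_ite_mem,
    univ_inter, ENNReal.toReal_prod]

variable [∀ i, Countable (β i)] [∀ i, MeasurableSingletonClass (β i)]

lemma indepSet_pi_of_dependsOn {s t : Set (∀ i, β i)} {S T : Finset ι} (hST : Disjoint S T)
    (hs : DependsOn (· ∈ s) S) (ht : DependsOn (· ∈ t) T) :
    IndepSet s t (Measure.pi ν) := by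
  have hX : IndepFun S.restrict T.restrict (Measure.pi ν) :=
    (iIndepFun_pi (X := fun _ => id) fun _ => aemeasurable_id).indepFun_finset S T hST
      fun i => measurable_pi_apply i
  rw [indepSet_iff_measure_inter_eq_mul .of_discrete .of_discrete (Measure.pi ν),
    ← restrict_preimage_image_of_dependsOn hs, ← restrict_preimage_image_of_dependsOn ht]
  exact hX.measure_inter_preimage_eq_mul _ _ .of_discrete .of_discrete

lemma indepSet_avoidSet_pi_of_dependsOn {E : J → Set (∀ i, β i)} {S : J → Finset ι}
    (hE : ∀ j, DependsOn (· ∈ E j) (S j)) {j : J} {T : Finset J}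
    (hT : ∀ k ∈ T, Disjoint (S k) (S j)) :
    IndepSet (E j) (avoidSet E T) (Measure.pi ν) := by
  classical
  refine indepSet_pi_of_dependsOn (S := S j) (T := T.biUnion S)
    ((disjoint_biUnion_right _ _ _).2 fun k hk => (hT k hk).symm) (hE j) ?_
  simpa using dependsOn_mem_avoidSet (fun k => hE k) T

lemma measureReal_pi_avoidSet [DecidableEq J] {E : J → Set (∀ i, β i)} {S : J → Finset ι}
    (hE : ∀ j, DependsOn (· ∈ E j) (S j)) (T : Finset J)
    (hT : (T : Set J).PairwiseDisjoint S) :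
    (Measure.pi ν).real (avoidSet E T) = ∏ k ∈ T, (1 - (Measure.pi ν).real (E k)) := by
  induction T using Finset.induction_on with
  | empty => simp [avoidSet]
  | insert a T ha ih =>
    rw [coe_insert] at hT
    have hindep := indepSet_avoidSet_pi_of_dependsOn (ν := ν) hE (j := a) (T := T)
      fun k hk => hT (by simp [hk]) (by simp) (ne_of_mem_of_not_mem hk ha)
    have hsplit := measureReal_inter_add_sdiff (μ := Measure.pi ν) (s := avoidSet E T)
      (MeasurableSet.of_discrete (s := E a))
    rw [Set.inter_comm, hindep.measureReal_inter_eq_mul] at hsplit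
    rw [avoidSet_insert, prod_insert ha, ← ih (hT.subset (by simp))]
    linarith

end ProductMeasure

section Counting

variable {V : Type*} [Fintype V] (G : SimpleGraph V) [DecidableRel G.Adj] (w : ℕ)

noncomputable def coveringDependencyBound : ℝ :=
  (#G.edgeFinset : ℝ) * ((Fintype.card V - 2).choose w : ℝ) -
    ((#G.edgeFinset : ℝ) - ((w : ℝ) + 2) * (G.maxDegree : ℝ)) *
      ((Fintype.card V - w - 4).choose w : ℝ)

lemma coveringDependencyBound_nonneg : 0 ≤ coveringDependencyBound G w := by
  have h : ((Fintype.card V - w - 4).choose w : ℝ) ≤ (Fintype.card V - 2).choose w := by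
    exact_mod_cast Nat.choose_le_choose w (by omega)
  have h₁ := mul_nonneg (Nat.cast_nonneg (α := ℝ) #G.edgeFinset) (sub_nonneg.2 h)
  have h₂ : 0 ≤ ((w : ℝ) + 2) * G.maxDegree * (Fintype.card V - w - 4).choose w := by positivity
  rw [coveringDependencyBound]
  linarith

variable [DecidableEq V]

def coveringConstraints : Finset (Σ _ : Sym2 V, Finset V) :=
  G.edgeFinset.sigma fun e => (univ \ e.toFinset).powersetCard w

def constraintSupport (c : Σ _ : Sym2 V, Finset V) : Finset V := c.1.toFinset ∪ c.2

variable {G w} in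
lemma mem_coveringConstraints {c : Σ _ : Sym2 V, Finset V} :
    c ∈ coveringConstraints G w ↔ c.1 ∈ G.edgeFinset ∧ #c.2 = w ∧ Disjoint c.2 c.1.toFinset := by
  simp [coveringConstraints, subset_sdiff, and_comm (a := #c.2 = w)]

lemma card_coveringConstraints :
    #(coveringConstraints G w) = #G.edgeFinset * (Fintype.card V - 2).choose w := by
  rw [coveringConstraints, card_sigma, sum_const_nat fun e he => ?_]
  rw [card_powersetCard, card_univ_sdiff, Sym2.card_toFinset_of_not_isDiag _
    (G.not_isDiag_of_mem_edgeSet (SimpleGraph.mem_edgeFinset.1 he))]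

lemma card_filter_not_disjoint_toFinset_le (S : Finset V) :
    #{e ∈ G.edgeFinset | ¬Disjoint e.toFinset S} ≤ #S * G.maxDegree := by
  calc #{e ∈ G.edgeFinset | ¬Disjoint e.toFinset S}
      ≤ #(S.biUnion fun v => G.incidenceFinset v) := card_le_card fun e he => by
        obtain ⟨he, hS⟩ := mem_filter.1 he
        obtain ⟨v, hve, hvS⟩ := not_disjoint_iff.1 hS
        exact mem_biUnion.2 ⟨v, hvS, (G.mem_incidenceFinset v e).2
          ⟨SimpleGraph.mem_edgeFinset.1 he, Sym2.mem_toFinset.1 hve⟩⟩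
    _ ≤ ∑ v ∈ S, #(G.incidenceFinset v) := card_biUnion_le
    _ ≤ #S * G.maxDegree := by
        simpa [G.card_incidenceFinset_eq_degree] using
          sum_le_card_nsmul S _ _ fun v _ => G.degree_le_maxDegree v

lemma card_filter_disjoint_mul_choose_le (S : Finset V) :
    #{e ∈ G.edgeFinset | Disjoint e.toFinset S} * (Fintype.card V - #S - 2).choose w ≤
      #{c ∈ coveringConstraints G w | Disjoint (constraintSupport c) S} := by
  calc #{e ∈ G.edgeFinset | Disjoint e.toFinset S} * (Fintype.card V - #S - 2).choose w
      = #({e ∈ G.edgeFinset | Disjoint e.toFinset S}.sigma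
          fun e => (univ \ (e.toFinset ∪ S)).powersetCard w) := by
        rw [card_sigma, sum_const_nat fun e he => ?_]
        obtain ⟨he, heS⟩ := mem_filter.1 he
        rw [card_powersetCard, card_univ_sdiff, card_union_of_disjoint heS,
          Sym2.card_toFinset_of_not_isDiag _
            (G.not_isDiag_of_mem_edgeSet (SimpleGraph.mem_edgeFinset.1 he)), Nat.sub_sub,
          add_comm]
    _ ≤ #{c ∈ coveringConstraints G w | Disjoint (constraintSupport c) S} :=
        card_le_card fun c hc => by
          simp only [mem_sigma, mem_filter, mem_powersetCard, subset_sdiff, subset_univ,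
            true_and, disjoint_union_right] at hc
          simp only [mem_filter, mem_coveringConstraints, constraintSupport, disjoint_union_left]
          exact ⟨⟨hc.1.1, hc.2.2, hc.2.1.1⟩, hc.1.2, hc.2.1.2⟩

lemma card_filter_not_disjoint_constraintSupport_le (S : Finset V) :
    (#{c ∈ coveringConstraints G w | ¬Disjoint (constraintSupport c) S} : ℝ) ≤
      #G.edgeFinset * (Fintype.card V - 2).choose w -
        (#G.edgeFinset - #S * G.maxDegree) * (Fintype.card V - #S - 2).choose w := by
  have hC := card_filter_add_card_filter_not
    (s := coveringConstraints G w) (fun c => Disjoint (constraintSupport c) S)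
  have hE := card_filter_add_card_filter_not
    (s := G.edgeFinset) (fun e => Disjoint e.toFinset S)
  have h₁ : (#{e ∈ G.edgeFinset | ¬Disjoint e.toFinset S} : ℝ) ≤ #S * G.maxDegree := by
    exact_mod_cast card_filter_not_disjoint_toFinset_le G S
  have h₂ : (#{e ∈ G.edgeFinset | Disjoint e.toFinset S} : ℝ) * (Fintype.card V - #S - 2).choose w
      ≤ #{c ∈ coveringConstraints G w | Disjoint (constraintSupport c) S} := by
    exact_mod_cast card_filter_disjoint_mul_choose_le G w S
  rw [card_coveringConstraints] at hC
  have hC' := congrArg (Nat.cast (R := ℝ)) hC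
  have hE' := congrArg (Nat.cast (R := ℝ)) hE
  push_cast at hC' hE'
  have h₃ : ((#G.edgeFinset : ℝ) - #S * G.maxDegree) * (Fintype.card V - #S - 2).choose w ≤
      #{e ∈ G.edgeFinset | Disjoint e.toFinset S} * (Fintype.card V - #S - 2).choose w :=
    mul_le_mul_of_nonneg_right (by linarith) (Nat.cast_nonneg _)
  linarith

end Counting

section RandomRows

variable {V : Type*} [DecidableEq V] {n : ℕ}

def rowSeparates (e : Sym2 V) (W : Finset V) (i : Fin n) : Set (Fin n × V → Bool) :=
  {ω | ∀ v ∈ e.toFinset ∪ W, ω (i, v) = decide (v ∈ e)}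

lemma dependsOn_mem_rowSeparates (e : Sym2 V) (W : Finset V) (i : Fin n) :
    DependsOn (· ∈ rowSeparates e W i) (({i} ×ˢ (e.toFinset ∪ W) : Finset _) : Set (Fin n × V)) :=
  fun x y hxy => propext <| forall₂_congr fun v hv => by
    rw [hxy (i, v) (by simpa using hv)]

lemma dependsOn_mem_avoidSet_rowSeparates (e : Sym2 V) (W : Finset V) :
    DependsOn (· ∈ avoidSet (rowSeparates (n := n) e W) univ)
      (((univ : Finset (Fin n)) ×ˢ (e.toFinset ∪ W) : Finset _) : Set (Fin n × V)) :=
  (dependsOn_mem_avoidSet (dependsOn_mem_rowSeparates e W) univ).mono fun c hc => by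
    simp only [Set.mem_iUnion, coe_product, coe_singleton, Set.mem_prod] at hc
    obtain ⟨i, -, -, hc⟩ := hc
    simpa using hc

variable [Fintype V] (p : I)

def rowSets (ω : Fin n × V → Bool) (i : Fin n) : Finset V := {v | ω (i, v)}

lemma measureReal_rowSeparates {e : Sym2 V} {W : Finset V} (he : ¬e.IsDiag)
    (heW : Disjoint W e.toFinset) (i : Fin n) :
    (Measure.pi fun _ => Ber(true, false, p)).real (rowSeparates e W i) =
      p ^ 2 * (1 - p) ^ #W := by
  have : rowSeparates e W i =
      {ω | ∀ c ∈ ({i} ×ˢ (e.toFinset ∪ W) : Finset _), ω c = decide (c.2 ∈ e)} := by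
    ext ω
    simp only [rowSeparates, Set.mem_ofPred_eq, mem_product, mem_singleton]
    constructor
    · rintro h ⟨j, v⟩ ⟨rfl, hv⟩
      exact h v hv
    · exact fun h v hv => h (i, v) ⟨rfl, hv⟩
  have hBer (b : Bool) : Ber(true, false, p).real {b} = if b then (p : ℝ) else 1 - p := by
    cases b <;> simp
  rw [this, measureReal_pi_setOf_forall_mem_eq, prod_product, prod_singleton,
    prod_union heW.symm,
    prod_congr (rfl : e.toFinset = _) (g := fun _ => (p : ℝ)) fun v hv => by
      rw [hBer, if_pos (by simpa using hv)],
    prod_congr (rfl : W = _) (g := fun _ => 1 - (p : ℝ)) fun v hv => by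
      rw [hBer, if_neg (by simpa using disjoint_left.1 heW hv)],
    prod_const, prod_const, Sym2.card_toFinset_of_not_isDiag _ he]

lemma measureReal_avoidSet_rowSeparates {e : Sym2 V} {W : Finset V} (he : ¬e.IsDiag)
    (heW : Disjoint W e.toFinset) :
    (Measure.pi fun _ => Ber(true, false, p)).real (avoidSet (rowSeparates (n := n) e W) univ) =
      (1 - p ^ 2 * (1 - p) ^ #W) ^ n := by
  rw [measureReal_pi_avoidSet (dependsOn_mem_rowSeparates e W), prod_congr rfl fun i _ =>
    by rw [measureReal_rowSeparates p he heW i]]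
  · simp
  · intro i _ j _ hij
    exact disjoint_product.2 (.inl (disjoint_singleton.2 hij))

end RandomRows

section Covering

variable {V : Type*} [Fintype V] [DecidableEq V] {G : SimpleGraph V} [DecidableRel G.Adj] {w : ℕ}

lemma card_filter_not_disjoint_constraintSupport_le_coveringDependencyBound
    {c : Σ _ : Sym2 V, Finset V} (hc : c ∈ coveringConstraints G w) :
    (#{k ∈ coveringConstraints G w | ¬Disjoint (constraintSupport k) (constraintSupport c)} : ℝ)
      ≤ coveringDependencyBound G w := by
  obtain ⟨he, hW, hWe⟩ := mem_coveringConstraints.1 hc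
  have hS : #(constraintSupport c) = w + 2 := by
    rw [constraintSupport, card_union_of_disjoint hWe.symm, hW, Sym2.card_toFinset_of_not_isDiag _
      (G.not_isDiag_of_mem_edgeSet (SimpleGraph.mem_edgeFinset.1 he)), add_comm]
  have h := card_filter_not_disjoint_constraintSupport_le G w (constraintSupport c)
  rwa [hS, show Fintype.card V - (w + 2) - 2 = Fintype.card V - w - 4 by omega, Nat.cast_add,
    Nat.cast_two] at h

lemma isCovering_rowSets {n : ℕ} {ω : Fin n × V → Bool}
    (hω : ∀ c ∈ coveringConstraints G w, ω ∉ avoidSet (rowSeparates c.1 c.2) univ) :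
    IsCovering G w 1 (rowSets ω) := by
  intro u v huv W hW hu hv
  have hc : (⟨s(u, v), W⟩ : Σ _ : Sym2 V, Finset V) ∈ coveringConstraints G w :=
    mem_coveringConstraints.2 ⟨G.mem_edgeFinset.2 huv, hW, by simp [Sym2.toFinset_mk_eq, hu, hv]⟩
  obtain ⟨i, hi⟩ : ∃ i, ω ∈ rowSeparates s(u, v) W i := by
    simpa [avoidSet] using hω _ hc
  refine one_le_card.2 ⟨i, mem_filter.2 ⟨mem_univ _, ?_, ?_, ?_⟩⟩
  · simpa [rowSets] using hi u (by simp [Sym2.toFinset_mk_eq])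
  · simpa [rowSets] using hi v (by simp [Sym2.toFinset_mk_eq])
  · refine disjoint_left.2 fun z hz hz' => ?_
    have := hi z (mem_union_right _ hz)
    simp only [rowSets, mem_filter, mem_univ, true_and] at hz'
    simp [hz', show z ≠ u by rintro rfl; exact hu hz, show z ≠ v by rintro rfl; exact hv hz] at this

theorem exists_isCovering_of_pow_le (p : I) (n : ℕ)
    (h : (1 - p ^ 2 * (1 - p) ^ w) ^ n ≤ (Real.exp 1 * (coveringDependencyBound G w + 1))⁻¹) :
    ∃ A : Fin n → Finset V, IsCovering G w 1 A := by
  set C := coveringConstraints G w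
  let E : C → Set (Fin n × V → Bool) := fun c => avoidSet (rowSeparates c.1.1 c.1.2) univ
  let Γ : C → Finset C := fun c =>
    {k ∈ C | ¬Disjoint (constraintSupport k) (constraintSupport c.1)}.subtype (· ∈ C)
  have hD := coveringDependencyBound_nonneg G w
  have hindep (c : C) (T : Finset C) (_ : c ∉ T) (hT : Disjoint T (Γ c)) :
      IndepSet (E c) (avoidSet E T) (Measure.pi fun _ => Ber(true, false, p)) :=
    indepSet_avoidSet_pi_of_dependsOn (S := fun k : C => univ ×ˢ constraintSupport k.1)
      (fun k => dependsOn_mem_avoidSet_rowSeparates _ _) fun k hk =>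
        disjoint_product.2 <| .inr <| not_not.1 fun h =>
          disjoint_left.1 hT hk (mem_subtype.2 (mem_filter.2 ⟨k.2, h⟩))
  have hΓ (c : C) : #(Γ c) ≤ ⌊coveringDependencyBound G w⌋₊ := by
    refine Nat.le_floor ?_
    rw [card_subtype, filter_filter, filter_congr fun k hk => and_iff_left hk]
    exact card_filter_not_disjoint_constraintSupport_le_coveringDependencyBound c.2
  obtain ⟨ω, hω⟩ := exists_forall_notMem_of_lovasz
    (μ := Measure.pi fun _ : Fin n × V => Ber(true, false, p)) (E := E) Γ
    (fun _ => .of_discrete) hΓ hindep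
    (fun c => by
      obtain ⟨he, hW, hWe⟩ := mem_coveringConstraints.1 c.2
      rw [measureReal_avoidSet_rowSeparates p
        (G.not_isDiag_of_mem_edgeSet (SimpleGraph.mem_edgeFinset.1 he)) hWe, hW]
      exact h.trans (inv_anti₀ (by positivity) (by gcongr; exact Nat.floor_le hD)))
  exact ⟨rowSets ω, isCovering_rowSets fun c hc => hω ⟨c, hc⟩⟩

end Covering

lemma pow_le_inv_of_logb_div_le {q y : ℝ} (hq0 : 0 < q) (hq1 : q < 1) (hy : 0 < y) {n : ℕ}
    (hn : Real.logb 2 y / -Real.logb 2 q ≤ n) : q ^ n ≤ y⁻¹ := by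
  have hlogq : 0 < -Real.logb 2 q := neg_pos.2 (Real.logb_neg one_lt_two hq0 hq1)
  rw [div_le_iff₀ hlogq] at hn
  rw [← Real.logb_le_logb one_lt_two (pow_pos hq0 n) (inv_pos.2 hy), Real.logb_pow,
    Real.logb_inv]
  linarith

theorem stmt_19_general {V : Type*} [Fintype V] [DecidableEq V] (G : SimpleGraph V)
    [DecidableRel G.Adj] (t m Δ w : ℕ)
    (ht : Fintype.card V = t) (hm : G.edgeFinset.card = m)
    (hΔ : G.maxDegree = Δ)
    (p : ℝ) (hp0 : 0 < p) (hp1 : p < 1)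
    (q : ℝ) (hq : q = 1 - p ^ 2 * (1 - p) ^ w)
    (D : ℝ) (hD : D = (m : ℝ) * (Nat.choose (t - 2) w : ℝ) -
      ((m : ℝ) - ((w : ℝ) + 2) * (Δ : ℝ)) * (Nat.choose (t - w - 4) w : ℝ)) :
    NGraphCov G w 1 ≤
      ⌈Real.logb 2 (Real.exp 1 * (D + 1)) / (-Real.logb 2 q)⌉₊ := by
  subst ht hm hΔ hq hD
  have hp : 0 < p ^ 2 * (1 - p) ^ w := by have := sub_pos.2 hp1; positivity
  have hp' : p ^ 2 * (1 - p) ^ w < 1 :=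
    mul_lt_one_of_nonneg_of_lt_one_left (by positivity) (by nlinarith)
      (pow_le_one₀ (by linarith) (by linarith))
  have hD := coveringDependencyBound_nonneg G w
  exact Nat.sInf_le <| exists_isCovering_of_pow_le (w := w) ⟨p, hp0.le, hp1.le⟩ _ <|
    pow_le_inv_of_logb_div_le (by linarith) (by linarith) (by positivity) (Nat.le_ceil _)

theorem stmt_19 {V : Type*} [Fintype V] [DecidableEq V] (G : SimpleGraph V)
    [DecidableRel G.Adj] (t m Δ w : ℕ) (hw : 0 < w)
    (ht : Fintype.card V = t) (hm : G.edgeFinset.card = m)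
    (hΔ : G.maxDegree = Δ)
    (p : ℝ) (hp0 : 0 < p) (hp1 : p < 1)
    (q : ℝ) (hq : q = 1 - p ^ 2 * (1 - p) ^ w)
    (D : ℝ) (hD : D = (m : ℝ) * (Nat.choose (t - 2) w : ℝ) -
      ((m : ℝ) - ((w : ℝ) + 2) * (Δ : ℝ)) * (Nat.choose (t - w - 4) w : ℝ)) :
    NGraphCov G w 1 ≤
      ⌈Real.logb 2 (Real.exp 1 * (D + 1)) / (-Real.logb 2 q)⌉₊ :=
  stmt_19_general G t m Δ w ht hm hΔ p hp0 hp1 q hq D hD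
end
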